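/- arXiv:math/0512087 — 6 statements merged into one kernel-verified Lean document; each statement's English description precedes it below -/
import Mathlib

section
/- Let G be a group generated by a finite set S₀, and let K ≤ H ≤ G be subgroups with [H:K] infinite. If the number of filtered ends e(G,H) is finite and nonzero, then e(G,K) = 1. -/
open SimpleGraph

/-- The saturation `K • S` of a set `S` of vertices under the action of a subgroup `K`. -/
def Subgroup.satSet {H : Type*} [Group H] (K : Subgroup H) {V : Type*} [MulAction H V]
    (S : Set V) : Set V :=
  {v | ∃ g ∈ K, ∃ s ∈ S, g • s = v}

theorem Subgroup.satSet_mono {H : Type*} [Group H] (K : Subgroup H) {V : Type*}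
    [MulAction H V] {S S' : Set V} (h : S ⊆ S') : K.satSet S ⊆ K.satSet S' := by
  rintro v ⟨g, hg, s, hs, rfl⟩
  exact ⟨g, hg, s, h hs, rfl⟩

/-- A set of vertices is `K`-bounded if it is contained in the saturation of a finite set. -/
def Subgroup.bddSet {H : Type*} [Group H] (K : Subgroup H) {V : Type*} [MulAction H V]
    (A : Set V) : Prop :=
  ∃ T : Finset V, A ⊆ K.satSet ↑T

/-- The inclusion of one induced subgraph into a larger one, as a graph homomorphism. -/
def SimpleGraph.inclHom {V : Type*} (Y : SimpleGraph V) {W W' : Set V} (h : W ⊆ W') :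
    Y.induce W →g Y.induce W' where
  toFun v := ⟨v.1, h v.2⟩
  map_rel' := fun hab => hab

/-- The set of filtered ends of a graph `Y` with respect to a subgroup `K` of a group acting
on the vertices: the inverse limit, over finite sets `S` of vertices directed by inclusion, of
the sets of connected components of the subgraph induced on the complement of `K • S`. -/
def filteredEnds {V H : Type*} [Group H] [MulAction H V] (Y : SimpleGraph V)
    (K : Subgroup H) : Type _ :=
  { f : ∀ S : Finset V, (Y.induce ((K.satSet (S : Set V))ᶜ)).ConnectedComponent //
      ∀ ⦃S S' : Finset V⦄ (h : S ⊆ S'),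
        (f S').map (Y.inclHom (Set.compl_subset_compl.mpr
          (K.satSet_mono (Finset.coe_subset.mpr h)))) = f S }

/-- The set of vertices adjacent to some vertex of `W`. -/
def SimpleGraph.nbhd {V : Type*} (Y : SimpleGraph V) (W : Set V) : Set V :=
  {v | ∃ w ∈ W, Y.Adj v w}

/-- The Cayley graph of a group with respect to a finite set `S₀`. -/
def cayleyGraph (G : Type*) [Group G] (S₀ : Finset G) : SimpleGraph G where
  Adj x y := x ≠ y ∧ (x⁻¹ * y ∈ S₀ ∨ y⁻¹ * x ∈ S₀)
  symm := by
    constructor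
    rintro x y ⟨hne, h⟩
    exact ⟨hne.symm, h.symm⟩
  loopless := ⟨fun x h => h.1 rfl⟩

namespace FE


variable {V : Type*} {Y : SimpleGraph V}

/-- Reachability within a set `A` (all vertices of the walk, including endpoints, in `A`). -/
def ReachIn (Y : SimpleGraph V) (A : Set V) (a b : V) : Prop :=
  ∃ w : Y.Walk a b, ∀ v ∈ w.support, v ∈ A

theorem ReachIn.mem_left {A : Set V} {a b : V} (h : ReachIn Y A a b) : a ∈ A := by
  obtain ⟨w, hw⟩ := h
  exact hw a w.start_mem_support

theorem ReachIn.mem_right {A : Set V} {a b : V} (h : ReachIn Y A a b) : b ∈ A := by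
  obtain ⟨w, hw⟩ := h
  exact hw b w.end_mem_support

theorem ReachIn.refl {A : Set V} {a : V} (ha : a ∈ A) : ReachIn Y A a a :=
  ⟨Walk.nil, by simp [ha]⟩

theorem ReachIn.symm {A : Set V} {a b : V} (h : ReachIn Y A a b) : ReachIn Y A b a := by
  obtain ⟨w, hw⟩ := h
  exact ⟨w.reverse, by intro v hv; exact hw v (by simpa using hv)⟩

theorem ReachIn.trans {A : Set V} {a b c : V} (h : ReachIn Y A a b) (h' : ReachIn Y A b c) :
    ReachIn Y A a c := by
  obtain ⟨w, hw⟩ := h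
  obtain ⟨w', hw'⟩ := h'
  refine ⟨w.append w', ?_⟩
  intro v hv
  rcases (Walk.mem_support_append_iff _ _).mp hv with h | h
  · exact hw v h
  · exact hw' v h

theorem ReachIn.mono {A B : Set V} (hAB : A ⊆ B) {a b : V} (h : ReachIn Y A a b) :
    ReachIn Y B a b := by
  obtain ⟨w, hw⟩ := h
  exact ⟨w, fun v hv => hAB (hw v hv)⟩

theorem ReachIn.adj {A : Set V} {a b c : V} (h : ReachIn Y A a b) (hbc : Y.Adj b c)
    (hc : c ∈ A) : ReachIn Y A a c := by
  refine h.trans ⟨hbc.toWalk, ?_⟩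
  intro v hv
  rcases List.mem_pair.mp (by simpa using hv) with rfl | rfl
  · exact h.mem_right
  · exact hc

/-- The "component" of `x` within the set `A`. -/
def CompIn (Y : SimpleGraph V) (A : Set V) (x : V) : Set V := {y | ReachIn Y A x y}

theorem CompIn.adj_closed {A : Set V} {x u v : V} (hu : u ∈ CompIn Y A x) (huv : Y.Adj u v)
    (hv : v ∈ A) : v ∈ CompIn Y A x :=
  ReachIn.adj hu huv hv

theorem CompIn.eq_of_mem {A : Set V} {x y : V} (h : y ∈ CompIn Y A x) :
    CompIn Y A x = CompIn Y A y := by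
  ext z
  exact ⟨fun hz => (ReachIn.symm h).trans hz, fun hz => ReachIn.trans h hz⟩

theorem CompIn.self_mem {A : Set V} {x : V} (hx : x ∈ A) : x ∈ CompIn Y A x :=
  ReachIn.refl hx

/-- A walk from inside a component to outside of it must leave `A`. -/
theorem exists_support_not_mem {A : Set V} {x a b : V} (w : Y.Walk a b)
    (ha : a ∈ CompIn Y A x) (hb : b ∉ CompIn Y A x) : ∃ v ∈ w.support, v ∉ A := by
  induction w with
  | nil => exact absurd ha hb
  | @cons u c d hadj w ih =>
    by_cases hc : c ∈ A
    · have hc' : c ∈ CompIn Y A x := CompIn.adj_closed ha hadj hc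
      obtain ⟨v, hv, hv'⟩ := ih hc' hb
      exact ⟨v, by simp [hv], hv'⟩
    · exact ⟨c, by simp, hc⟩

/-- From an induced walk to `ReachIn`. -/
theorem induce_reachable_to_reachIn {A : Set V} {a b : A}
    (h : (Y.induce A).Reachable a b) : ReachIn Y A (a : V) (b : V) := by
  obtain ⟨w⟩ := h
  induction w with
  | nil => exact ReachIn.refl (Subtype.coe_prop _)
  | @cons u c d hadj w ih =>
    have h1 : ReachIn Y A (u : V) (c : V) :=
      ⟨Walk.cons (by exact hadj) Walk.nil, by
        intro v hv
        have hv' : v ∈ [(u : V), (c : V)] := hv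
        rcases List.mem_pair.mp hv' with rfl | rfl
        · exact u.2
        · exact c.2⟩
    exact h1.trans ih

/-- From `ReachIn` to an induced walk. -/
theorem reachIn_to_induce_reachable {A : Set V} :
    ∀ {a b : V}, ∀ w : Y.Walk a b, (∀ v ∈ w.support, v ∈ A) →
      ∀ (ha : a ∈ A) (hb : b ∈ A), (Y.induce A).Reachable ⟨a, ha⟩ ⟨b, hb⟩ := by
  intro a b w
  induction w with
  | nil => intro _ ha hb; rfl
  | @cons u c d hadj w ih =>
    intro hs ha hb
    have hc : c ∈ A := hs c (by simp)
    have h1 : (Y.induce A).Reachable ⟨u, ha⟩ ⟨c, hc⟩ :=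
      (SimpleGraph.Adj.reachable (by exact hadj))
    exact h1.trans (ih (fun v hv => hs v (by simp [hv])) hc hb)

theorem reachable_induce_iff {A : Set V} (a b : A) :
    (Y.induce A).Reachable a b ↔ ReachIn Y A a b := by
  constructor
  · exact induce_reachable_to_reachIn
  · rintro ⟨w, hw⟩
    have := reachIn_to_induce_reachable (Y := Y) w hw a.2 b.2
    simpa using this



variable {G : Type} [Group G] (S₀ : Finset G)

/-- Left multiplication as a graph homomorphism of the Cayley graph. -/
def mulHom (g : G) : cayleyGraph G S₀ →g cayleyGraph G S₀ where
  toFun x := g * x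
  map_rel' := by
    rintro x y ⟨hne, h⟩
    refine ⟨fun he => hne (mul_left_cancel he), ?_⟩
    simpa [mul_assoc] using h

@[simp] theorem mulHom_apply (g x : G) : mulHom S₀ g x = g * x := rfl

theorem cayley_adj_mul {g x y : G} :
    (cayleyGraph G S₀).Adj (g * x) (g * y) ↔ (cayleyGraph G S₀).Adj x y := by
  constructor
  · rintro ⟨hne, h⟩
    refine ⟨fun he => hne (by rw [he]), ?_⟩
    simpa [mul_assoc] using h
  · exact fun h => (mulHom S₀ g).map_rel h

theorem cayley_preconnected (hgen : Subgroup.closure (S₀ : Set G) = ⊤) :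
    (cayleyGraph G S₀).Preconnected := by
  have reach1 : ∀ g : G, (cayleyGraph G S₀).Reachable 1 g := by
    intro g
    have hg : g ∈ Subgroup.closure (S₀ : Set G) := by rw [hgen]; trivial
    induction hg using Subgroup.closure_induction with
    | mem s hs =>
      by_cases h1 : (1 : G) = s
      · rw [← h1]
      · exact SimpleGraph.Adj.reachable ⟨h1, Or.inl (by simpa using hs)⟩
    | one => rfl
    | mul a b _ _ ha hb =>
      refine ha.trans ?_
      obtain ⟨w⟩ := hb
      exact ⟨(w.map (mulHom S₀ a)).copy (by simp) rfl⟩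
    | inv a _ ha =>
      have : (cayleyGraph G S₀).Reachable a⁻¹ 1 := by
        obtain ⟨w⟩ := ha
        exact ⟨(w.map (mulHom S₀ a⁻¹)).copy (by simp) (by simp)⟩
      exact this.symm
  intro x y
  exact (reach1 x).symm.trans (reach1 y)

theorem cayley_locally_finite (x : G) : ((cayleyGraph G S₀).neighborSet x).Finite := by
  have h : (cayleyGraph G S₀).neighborSet x ⊆
      ((fun s => x * s) '' ↑S₀) ∪ ((fun s => x * s⁻¹) '' ↑S₀) := by
    rintro y ⟨-, h | h⟩
    · exact Or.inl ⟨x⁻¹ * y, h, by group⟩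
    · exact Or.inr ⟨y⁻¹ * x, h, by group⟩
  exact Set.Finite.subset (Set.Finite.union (Set.Finite.image _ (Finset.finite_toSet _))
    (Set.Finite.image _ (Finset.finite_toSet _))) h

theorem countable_of_gen (hgen : Subgroup.closure (S₀ : Set G) = ⊤) : Countable G := by
  let f : List (↥(S₀ : Set G) × Bool) → G := fun l =>
    (l.map (fun p => if p.2 then (p.1 : G) else (p.1 : G)⁻¹)).prod
  have hsurj : Function.Surjective f := by
    intro g
    have hg : g ∈ Subgroup.closure (S₀ : Set G) := by rw [hgen]; trivial
    induction hg using Subgroup.closure_induction with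
    | mem s hs => exact ⟨[(⟨s, hs⟩, true)], by simp [f]⟩
    | one => exact ⟨[], by simp [f]⟩
    | mul a b _ _ ha hb =>
      obtain ⟨la, hla⟩ := ha
      obtain ⟨lb, hlb⟩ := hb
      exact ⟨la ++ lb, by simp [f, ← hla, ← hlb]⟩
    | inv a _ ha =>
      obtain ⟨la, hla⟩ := ha
      refine ⟨(la.map (fun p => (p.1, !p.2))).reverse, ?_⟩
      simp only [f, List.map_reverse, List.map_map, List.prod_reverse]
      rw [← hla]
      generalize la = l
      induction l with
      | nil => simp [f]
      | cons hd tl ih =>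
        simp only [List.map_cons, List.prod_cons, List.reverse_cons, mul_inv_rev,
          List.prod_append, List.prod_cons, List.prod_nil, Function.comp]
        rw [ih]
        show (f tl)⁻¹ * _ = (f (hd :: tl))⁻¹
        have : f (hd :: tl) = (if hd.2 then (hd.1 : G) else (hd.1 : G)⁻¹) * f tl := by
          simp [f]
        rw [this, mul_inv_rev]
        cases hd.2 <;> simp
  exact hsurj.countable



variable {G : Type} [Group G]

/-- The setoid of right cosets `L g` (orbits of left multiplication by `L`). -/
def lrel (L : Subgroup G) : Setoid G where
  r x y := ∃ l ∈ L, l * y = x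
  iseqv := by
    refine ⟨fun x => ⟨1, L.one_mem, one_mul x⟩, ?_, ?_⟩
    · rintro x y ⟨l, hl, rfl⟩
      exact ⟨l⁻¹, L.inv_mem hl, by group⟩
    · rintro x y z ⟨l, hl, rfl⟩ ⟨m, hm, rfl⟩
      exact ⟨l * m, L.mul_mem hl hm, by group⟩

variable (L : Subgroup G)

abbrev QV := Quotient (lrel L)

/-- projection to the coset space -/
def qm (x : G) : QV L := Quotient.mk (lrel L) x

theorem qm_eq_iff {x y : G} : qm L x = qm L y ↔ ∃ l ∈ L, l * y = x := by
  constructor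
  · intro h
    exact Quotient.exact h
  · intro h
    exact Quotient.sound h

theorem qm_surjective : Function.Surjective (qm L) := fun q => Quot.exists_rep q

theorem mem_satSet_iff {S : Set G} {x : G} :
    x ∈ L.satSet S ↔ ∃ s ∈ S, qm L x = qm L s := by
  constructor
  · rintro ⟨g, hg, s, hs, rfl⟩
    exact ⟨s, hs, (qm_eq_iff L).mpr ⟨g, hg, (smul_eq_mul g s).symm ▸ rfl⟩⟩
  · rintro ⟨s, hs, h⟩
    obtain ⟨l, hl, rfl⟩ := (qm_eq_iff L).mp h
    exact ⟨l, hl, s, hs, smul_eq_mul l s⟩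

theorem mem_satSet_finset_iff {T : Finset G} {x : G} :
    x ∈ L.satSet ↑T ↔ qm L x ∈ (qm L) '' ↑T := by
  rw [mem_satSet_iff]
  constructor
  · rintro ⟨s, hs, h⟩; exact ⟨s, hs, h.symm⟩
  · rintro ⟨s, hs, h⟩; exact ⟨s, hs, h.symm⟩

theorem satSet_mul_mem {S : Set G} {x g : G} (hg : g ∈ L) :
    g * x ∈ L.satSet S ↔ x ∈ L.satSet S := by
  simp only [mem_satSet_iff]
  have : qm L (g * x) = qm L x := (qm_eq_iff L).mpr ⟨g, hg, rfl⟩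
  rw [this]

variable (S₀ : Finset G)

/-- The quotient graph on the coset space. -/
def Qg : SimpleGraph (QV L) where
  Adj a b := a ≠ b ∧ ∃ x y : G, qm L x = a ∧ qm L y = b ∧ (cayleyGraph G S₀).Adj x y
  symm := by
    constructor
    rintro a b ⟨hne, x, y, hx, hy, hadj⟩
    exact ⟨hne.symm, y, x, hy, hx, hadj.symm⟩
  loopless := ⟨fun a h => h.1 rfl⟩

theorem qg_adj_of_adj {x y : G} (h : (cayleyGraph G S₀).Adj x y) :
    qm L x = qm L y ∨ (Qg L S₀).Adj (qm L x) (qm L y) := by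
  by_cases he : qm L x = qm L y
  · exact Or.inl he
  · exact Or.inr ⟨he, x, y, rfl, rfl, h⟩

theorem qg_lift_adj {x : G} {b : QV L} (h : (Qg L S₀).Adj (qm L x) b) :
    ∃ y : G, (cayleyGraph G S₀).Adj x y ∧ qm L y = b := by
  obtain ⟨hne, x', y', hx', hy', hadj⟩ := h
  obtain ⟨l, hl, hlx⟩ := (qm_eq_iff L).mp hx'
  refine ⟨l⁻¹ * y', ?_, ?_⟩
  · rcases hadj with ⟨hne2, hc⟩
    have hx2 : x = l⁻¹ * x' := by rw [← hlx]; group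
    rw [hx2]
    refine ⟨fun he => hne2 (mul_left_cancel he), ?_⟩
    simpa [mul_assoc] using hc
  · rw [← hy']
    exact (qm_eq_iff L).mpr ⟨l⁻¹, L.inv_mem hl, rfl⟩

theorem qg_preconnected (hgen : Subgroup.closure (S₀ : Set G) = ⊤) :
    (Qg L S₀).Preconnected := by
  have hX : (cayleyGraph G S₀).Preconnected := cayley_preconnected S₀ hgen
  intro a b
  obtain ⟨x, rfl⟩ := qm_surjective L a
  obtain ⟨y, rfl⟩ := qm_surjective L b
  obtain ⟨w⟩ := hX x y
  induction w with
  | nil => rfl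
  | @cons u c d hadj w ih =>
    rcases qg_adj_of_adj L S₀ hadj with he | ha
    · rw [he]; exact ih
    · exact (SimpleGraph.Adj.reachable ha).trans ih

theorem qg_locally_finite (a : QV L) : ((Qg L S₀).neighborSet a).Finite := by
  obtain ⟨x, rfl⟩ := qm_surjective L a
  have hx : ((cayleyGraph G S₀).neighborSet x).Finite := cayley_locally_finite S₀ x
  have : ((Qg L S₀).neighborSet (qm L x)) ⊆ (qm L) '' ((cayleyGraph G S₀).neighborSet x) := by
    intro b hb
    obtain ⟨y, hy, hyb⟩ := qg_lift_adj L S₀ hb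
    exact ⟨y, hy, hyb⟩
  exact Set.Finite.subset (Set.Finite.image _ hx) this


/-! ### Projection and lifting of reachability, downstairs finiteness -/

theorem reachIn_proj {T : Finset G} {x y : G}
    (h : ReachIn (cayleyGraph G S₀) (L.satSet ↑T)ᶜ x y) :
    ReachIn (Qg L S₀) ((qm L) '' ↑T)ᶜ (qm L x) (qm L y) := by
  obtain ⟨w, hw⟩ := h
  induction w with
  | nil =>
    refine ReachIn.refl ?_
    intro hmem
    exact (hw _ (by simp)) ((mem_satSet_finset_iff L).mpr hmem)
  | @cons a c b hadj w ih =>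
    have hc := ih (fun v hv => hw v (by simp [hv]))
    have ha' : qm L a ∈ ((qm L) '' ↑T)ᶜ := by
      intro hmem
      exact (hw a (by simp)) ((mem_satSet_finset_iff L).mpr hmem)
    rcases qg_adj_of_adj L S₀ hadj with he | hQ
    · rwa [he]
    · exact ((hc.symm).adj hQ.symm ha').symm

theorem reachIn_lift {T : Finset G} :
    ∀ {a b : QV L} (w : (Qg L S₀).Walk a b), (∀ v ∈ w.support, v ∈ ((qm L) '' ↑T)ᶜ) →
      ∀ x : G, qm L x = a → ∃ y : G, qm L y = b ∧
        ReachIn (cayleyGraph G S₀) (L.satSet ↑T)ᶜ x y := by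
  intro a b w
  induction w with
  | nil =>
    intro hs x hx
    refine ⟨x, hx, ReachIn.refl ?_⟩
    intro hmem
    have h2 := (mem_satSet_finset_iff L).mp hmem
    rw [hx] at h2
    exact hs _ (by simp) h2
  | @cons a c b hadj w ih =>
    intro hs x hx
    obtain ⟨y₁, hadj1, hy₁⟩ := qg_lift_adj L S₀ (x := x) (by rw [hx]; exact hadj)
    obtain ⟨y, hy, hr⟩ := ih (fun v hv => hs v (by simp [hv])) y₁ hy₁
    have hxc : x ∈ (L.satSet ↑T)ᶜ := by
      intro hmem
      have h2 := (mem_satSet_finset_iff L).mp hmem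
      rw [hx] at h2
      exact hs a (by simp) h2
    have hy₁c : y₁ ∈ (L.satSet ↑T)ᶜ := by
      intro hmem
      have h2 := (mem_satSet_finset_iff L).mp hmem
      rw [hy₁] at h2
      exact hs c (by simp) h2
    exact ⟨y, hy, ((ReachIn.refl hxc).adj hadj1 hy₁c).trans hr⟩

/-- Downstairs, every vertex outside a finite set reaches one of finitely many
boundary representatives while avoiding the finite set. -/
theorem qg_reps (hgen : Subgroup.closure (S₀ : Set G) = ⊤) (W : Set (QV L)) (hW : W.Finite) :
    ∃ R : Set (QV L), R.Finite ∧ ∀ b ∉ W, ∃ r ∈ R, ReachIn (Qg L S₀) Wᶜ b r := by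
  rcases Set.eq_empty_or_nonempty W with rfl | ⟨w₀, hw₀⟩
  · refine ⟨{qm L 1}, Set.finite_singleton _, fun b _ => ⟨qm L 1, rfl, ?_⟩⟩
    obtain ⟨w⟩ := qg_preconnected L S₀ hgen b (qm L 1)
    exact ⟨w, fun v _ => by simp⟩
  · have key : ∀ {a d : QV L} (w : (Qg L S₀).Walk a d), d ∈ W → a ∉ W →
        ∃ r ∈ ⋃ w ∈ W, (Qg L S₀).neighborSet w, ReachIn (Qg L S₀) Wᶜ a r := by
      intro a d w
      induction w with
      | nil => intro hd ha; exact absurd hd ha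
      | @cons a c d hadj w ih =>
        intro hd ha
        by_cases hc : c ∈ W
        · exact ⟨a, Set.mem_biUnion hc hadj.symm, ReachIn.refl (show a ∈ Wᶜ from ha)⟩
        · obtain ⟨r, hr, hrr⟩ := ih hd hc
          exact ⟨r, hr, ((ReachIn.refl (show a ∈ Wᶜ from ha)).adj hadj
            (show c ∈ Wᶜ from hc)).trans hrr⟩
    refine ⟨⋃ w ∈ W, (Qg L S₀).neighborSet w,
      Set.Finite.biUnion hW (fun w _ => qg_locally_finite L S₀ w), ?_⟩
    intro b hb
    obtain ⟨w⟩ := qg_preconnected L S₀ hgen b w₀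
    exact key w hw₀ hb

theorem image_finite_of_bounded {C : Set G} {T'' : Finset G} (h : C ⊆ L.satSet ↑T'') :
    ((qm L) '' C).Finite := by
  refine Set.Finite.subset (Set.Finite.image (qm L) (Finset.finite_toSet T'')) ?_
  rintro b ⟨y, hy, rfl⟩
  obtain ⟨s, hs, hqs⟩ := (mem_satSet_iff L).mp (h hy)
  exact ⟨s, hs, hqs.symm⟩

theorem bounded_of_image_finite {C : Set G} (h : ((qm L) '' C).Finite) :
    ∃ T'' : Finset G, C ⊆ L.satSet ↑T'' := by
  classical
  refine ⟨h.toFinset.image Quotient.out, ?_⟩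
  intro y hy
  rw [mem_satSet_iff]
  refine ⟨(qm L y).out, ?_, ?_⟩
  · simp only [Finset.coe_image, Set.mem_image, Finset.mem_coe, Set.Finite.mem_toFinset]
    exact ⟨qm L y, ⟨y, hy, rfl⟩, rfl⟩
  · exact (Quotient.out_eq _).symm

/-- All bounded components of the complement of `L • T` are contained in a single
`L • T'`. -/
theorem bounded_union (hgen : Subgroup.closure (S₀ : Set G) = ⊤) (T : Finset G) :
    ∃ T' : Finset G, ∀ x : G, x ∉ L.satSet ↑T →
      (∃ T'' : Finset G, CompIn (cayleyGraph G S₀) (L.satSet ↑T)ᶜ x ⊆ L.satSet ↑T'') →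
      CompIn (cayleyGraph G S₀) (L.satSet ↑T)ᶜ x ⊆ L.satSet ↑T' := by
  classical
  set W : Set (QV L) := (qm L) '' ↑T with hWdef
  have hW : W.Finite := Set.Finite.image _ (Finset.finite_toSet T)
  obtain ⟨R, hRfin, hR⟩ := qg_reps L S₀ hgen W hW
  set U : Set (QV L) := ⋃ r ∈ {r ∈ R | (CompIn (Qg L S₀) Wᶜ r).Finite},
    CompIn (Qg L S₀) Wᶜ r with hUdef
  have hUfin : U.Finite := by
    refine Set.Finite.biUnion (Set.Finite.subset hRfin (fun r hr => hr.1)) ?_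
    intro r hr
    exact hr.2
  refine ⟨T ∪ hUfin.toFinset.image Quotient.out, ?_⟩
  rintro x hx ⟨T'', hT''⟩ y hy
  -- image of the component equals the downstairs component
  have him1 : (qm L) '' (CompIn (cayleyGraph G S₀) (L.satSet ↑T)ᶜ x) ⊆
      CompIn (Qg L S₀) Wᶜ (qm L x) := by
    rintro b ⟨z, hz, rfl⟩
    exact reachIn_proj L S₀ hz
  have him2 : CompIn (Qg L S₀) Wᶜ (qm L x) ⊆
      (qm L) '' (CompIn (cayleyGraph G S₀) (L.satSet ↑T)ᶜ x) := by
    rintro b hb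
    obtain ⟨wlk, hwlk⟩ := hb
    obtain ⟨z, hz, hrz⟩ := reachIn_lift L S₀ wlk hwlk x rfl
    exact ⟨z, hrz, hz⟩
  have him : (qm L) '' (CompIn (cayleyGraph G S₀) (L.satSet ↑T)ᶜ x) =
      CompIn (Qg L S₀) Wᶜ (qm L x) := Set.Subset.antisymm him1 him2
  have hqx : qm L x ∉ W := fun hmem => hx ((mem_satSet_finset_iff L).mpr hmem)
  obtain ⟨r, hrR, hrreach⟩ := hR (qm L x) hqx
  have hcomp_eq : CompIn (Qg L S₀) Wᶜ (qm L x) = CompIn (Qg L S₀) Wᶜ r :=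
    CompIn.eq_of_mem hrreach
  have hfin : (CompIn (Qg L S₀) Wᶜ r).Finite := by
    rw [← hcomp_eq, ← him]
    exact image_finite_of_bounded L hT''
  have hyU : qm L y ∈ U := by
    refine Set.mem_biUnion (show r ∈ {r ∈ R | (CompIn (Qg L S₀) Wᶜ r).Finite} from
      ⟨hrR, hfin⟩) ?_
    rw [← hcomp_eq, ← him]
    exact ⟨y, hy, rfl⟩
  rw [mem_satSet_iff]
  refine ⟨(qm L y).out, ?_, (Quotient.out_eq _).symm⟩
  simp only [Finset.coe_union, Set.mem_union, Finset.coe_image, Set.mem_image,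
    Finset.mem_coe, Set.Finite.mem_toFinset]
  exact Or.inr ⟨qm L y, hyU, rfl⟩

/-! ### Interface for filtered ends -/

/-- `x` is a vertex of the component `f.1 T`. -/
def inComp (f : filteredEnds (cayleyGraph G S₀) L) (T : Finset G) (x : G) : Prop :=
  ∃ hx : x ∈ ((L.satSet (↑T : Set G))ᶜ : Set G),
    ((cayleyGraph G S₀).induce ((L.satSet (↑T : Set G))ᶜ)).connectedComponentMk ⟨x, hx⟩ = f.1 T

theorem inComp_exists (f : filteredEnds (cayleyGraph G S₀) L) (T : Finset G) :
    ∃ x, inComp L S₀ f T x := by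
  obtain ⟨⟨x, hx⟩, h⟩ := (f.1 T).exists_rep
  exact ⟨x, hx, h⟩

theorem inComp_not_mem {f : filteredEnds (cayleyGraph G S₀) L} {T : Finset G} {x : G}
    (h : inComp L S₀ f T x) : x ∉ L.satSet ↑T := h.1

theorem inComp_mono {f : filteredEnds (cayleyGraph G S₀) L} {T T' : Finset G} (hTT' : T ⊆ T')
    {x : G} (h : inComp L S₀ f T' x) : inComp L S₀ f T x := by
  obtain ⟨hx, hmk⟩ := h
  have hsub : (L.satSet (↑T : Set G))ᶜ ⊇ (L.satSet (↑T' : Set G))ᶜ :=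
    Set.compl_subset_compl.mpr (L.satSet_mono (Finset.coe_subset.mpr hTT'))
  refine ⟨hsub hx, ?_⟩
  have := f.2 hTT'
  rw [← this, ← hmk, SimpleGraph.ConnectedComponent.map_mk]
  rfl

theorem reach_of_inComp {f : filteredEnds (cayleyGraph G S₀) L} {T : Finset G} {x y : G}
    (hx : inComp L S₀ f T x) (hy : inComp L S₀ f T y) :
    ReachIn (cayleyGraph G S₀) (L.satSet ↑T)ᶜ x y := by
  obtain ⟨hx1, hx2⟩ := hx
  obtain ⟨hy1, hy2⟩ := hy
  have := SimpleGraph.ConnectedComponent.exact (hx2.trans hy2.symm)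
  exact induce_reachable_to_reachIn this

theorem inComp_of_reach {f : filteredEnds (cayleyGraph G S₀) L} {T : Finset G} {x y : G}
    (hx : inComp L S₀ f T x) (h : ReachIn (cayleyGraph G S₀) (L.satSet ↑T)ᶜ x y) :
    inComp L S₀ f T y := by
  obtain ⟨hx1, hx2⟩ := hx
  obtain ⟨w, hw⟩ := h
  have hy : y ∈ (L.satSet (↑T : Set G))ᶜ := hw y w.end_mem_support
  refine ⟨hy, ?_⟩
  rw [← hx2]
  exact (SimpleGraph.ConnectedComponent.sound
    (reachIn_to_induce_reachable w hw hx1 hy)).symm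

/-! ### Every unbounded component contains a filtered end -/

theorem endcomp (hgen : Subgroup.closure (S₀ : Set G) = ⊤) (T₀ : Finset G) (x₀ : G)
    (hunb : ∀ T'' : Finset G,
      ¬ CompIn (cayleyGraph G S₀) (L.satSet ↑T₀)ᶜ x₀ ⊆ L.satSet ↑T'') :
    ∃ f : filteredEnds (cayleyGraph G S₀) L, ∀ T : Finset G,
      ∃ x, inComp L S₀ f T x ∧ x ∈ CompIn (cayleyGraph G S₀) (L.satSet ↑T₀)ᶜ x₀ := by
  classical
  have hcnt : Countable G := countable_of_gen S₀ hgen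
  obtain ⟨e, he⟩ := exists_surjective_nat G
  set X := cayleyGraph G S₀ with hX
  set Tm : ℕ → Finset G := fun m => T₀ ∪ (Finset.range m).image e with hTm
  have hTmono : ∀ {i j : ℕ}, i ≤ j → Tm i ⊆ Tm j := by
    intro i j hij
    exact Finset.union_subset_union (Finset.Subset.refl _)
      (Finset.image_subset_image (by simpa using hij))
  have hT0 : ∀ m, T₀ ⊆ Tm m := fun m => Finset.subset_union_left
  have hcof : ∀ T : Finset G, ∃ m, T ⊆ Tm m := by
    intro T
    choose idx hidx using he
    refine ⟨(T.sup idx) + 1, ?_⟩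
    intro t ht
    refine Finset.mem_union_right _ (Finset.mem_image.mpr ⟨idx t, ?_, hidx t⟩)
    exact Finset.mem_range.mpr (Nat.lt_succ_of_le (Finset.le_sup ht))
  set C := CompIn X (L.satSet ↑T₀)ᶜ x₀ with hC
  set W : ℕ → Set (QV L) := fun m => qm L '' ↑(Tm m) with hW
  have hWfin : ∀ m, (W m).Finite := fun m => Set.Finite.image _ (Finset.finite_toSet _)
  have hWmono : ∀ {i j : ℕ}, i ≤ j → W i ⊆ W j := fun {i j} hij =>
    Set.image_mono (Finset.coe_subset.mpr (hTmono hij))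
  have hWcompl : ∀ {i j : ℕ}, i ≤ j → (W j)ᶜ ⊆ (W i)ᶜ := fun {i j} hij =>
    Set.compl_subset_compl.mpr (hWmono hij)
  have hCbar : (qm L '' C).Infinite := by
    intro hfin
    obtain ⟨T'', hT''⟩ := bounded_of_image_finite L hfin
    exact hunb T'' hT''
  have hcompl : ∀ m, (L.satSet ↑(Tm m))ᶜ ⊆ (L.satSet (↑T₀ : Set G))ᶜ := fun m =>
    Set.compl_subset_compl.mpr (L.satSet_mono (Finset.coe_subset.mpr (hT0 m)))
  have hCreach : ∀ (m : ℕ) (z : G), z ∈ C → ∀ y, ReachIn X (L.satSet ↑(Tm m))ᶜ z y →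
      y ∈ C := by
    intro m z hz y hr
    have h2 : y ∈ CompIn X (L.satSet ↑T₀)ᶜ z := hr.mono (hcompl m)
    rw [hC, CompIn.eq_of_mem hz]
    exact h2
  have hlift : ∀ (m : ℕ) (z : G), z ∈ C → ∀ b₀ b' : QV L, qm L z = b₀ →
      ReachIn (Qg L S₀) (W m)ᶜ b₀ b' →
      ∃ y, y ∈ C ∧ qm L y = b' ∧ ReachIn X (L.satSet ↑(Tm m))ᶜ z y := by
    intro m z hz b₀ b' hq hr
    subst hq
    obtain ⟨wlk, hwlk⟩ := hr
    obtain ⟨y, hy, hry⟩ := reachIn_lift L S₀ wlk hwlk z rfl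
    exact ⟨y, hCreach m z hz y hry, hy, hry⟩
  set good : ℕ → QV L → Prop := fun m b => b ∈ qm L '' C ∧ b ∉ W m with hgood
  have hgoodmono : ∀ {i j : ℕ}, i ≤ j → ∀ {b}, good j b → good i b :=
    fun {i j} hij {b} hb => ⟨hb.1, fun hmem => hb.2 (hWmono hij hmem)⟩
  have hgoodex : ∀ m, ∃ b, good m b := by
    intro m
    obtain ⟨b, hb1, hb2⟩ := ((hCbar.diff (hWfin m)).nonempty)
    exact ⟨b, hb1, hb2⟩
  have hreachgood : ∀ (m : ℕ) {b b' : QV L}, b ∈ qm L '' C →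
      ReachIn (Qg L S₀) (W m)ᶜ b b' → good m b' := by
    rintro m b b' ⟨z, hz, rfl⟩ hr
    obtain ⟨y, hyC, rfl, -⟩ := hlift m z hz _ b' rfl hr
    exact ⟨⟨y, hyC, rfl⟩, hr.mem_right⟩
  choose R hRfin hRrep using fun m => qg_reps L S₀ hgen (W m) (hWfin m)
  set alive : ℕ → QV L → Prop := fun m b => good m b ∧
      ∀ m', ∃ b', good m' b' ∧ ReachIn (Qg L S₀) (W m)ᶜ b b' with halive
  have hal1 : ∀ m, ∃ b, alive m b := by
    intro m
    by_contra hno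
    push_neg at hno
    have hdeath : ∀ b, good m b →
        ∃ m', ∀ b', good m' b' → ¬ ReachIn (Qg L S₀) (W m)ᶜ b b' := by
      intro b hb
      have h1 : ¬ (good m b ∧ ∀ m', ∃ b', good m' b' ∧
          ReachIn (Qg L S₀) (W m)ᶜ b b') := hno b
      have h2 := not_and.mp h1 hb
      push_neg at h2
      exact h2
    choose! D hD using hdeath
    set M := max m (((hRfin m).toFinset).sup D) with hM
    obtain ⟨bst, hbst⟩ := hgoodex M
    have hbm : good m bst := hgoodmono (le_max_left _ _) hbst
    obtain ⟨r, hrR, hrreach⟩ := hRrep m bst hbm.2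
    have hrgood : good m r := hreachgood m hbm.1 hrreach
    have hDle : D r ≤ M := le_trans (Finset.le_sup ((hRfin m).mem_toFinset.mpr hrR))
      (le_max_right _ _)
    exact hD r hrgood bst (hgoodmono hDle hbst) hrreach.symm
  have hal2 : ∀ m b, alive m b →
      ∃ b', alive (m + 1) b' ∧ ReachIn (Qg L S₀) (W m)ᶜ b b' := by
    intro m b hb
    by_contra hno
    push_neg at hno
    have hdeath : ∀ r, good (m + 1) r → ReachIn (Qg L S₀) (W m)ᶜ b r →
        ∃ m', ∀ b₂, good m' b₂ → ¬ ReachIn (Qg L S₀) (W (m + 1))ᶜ r b₂ := by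
      intro r h1 h2
      have h5 : ¬ (good (m + 1) r ∧ ∀ m', ∃ b', good m' b' ∧
          ReachIn (Qg L S₀) (W (m + 1))ᶜ r b') := fun hh => hno r hh h2
      have h6 := not_and.mp h5 h1
      push_neg at h6
      exact h6
    choose! D hD using hdeath
    set M := max (m + 1) (((hRfin (m + 1)).toFinset).sup D) with hM
    obtain ⟨bst, hgbst, hrbst⟩ := hb.2 M
    have hbm1 : good (m + 1) bst := hgoodmono (le_max_left _ _) hgbst
    obtain ⟨r, hrR, hrreach⟩ := hRrep (m + 1) bst hbm1.2
    have hrgood : good (m + 1) r := hreachgood (m + 1) hbm1.1 hrreach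
    have hrfromb : ReachIn (Qg L S₀) (W m)ᶜ b r :=
      hrbst.trans (hrreach.mono (hWcompl (Nat.le_succ m)))
    have hDle : D r ≤ M := le_trans
      (Finset.le_sup ((hRfin (m + 1)).mem_toFinset.mpr hrR)) (le_max_right _ _)
    exact hD r hrgood hrfromb bst (hgoodmono hDle hgbst) hrreach.symm
  -- build the coherent downward sequence
  set bs : ∀ m : ℕ, {b : QV L // alive m b} := fun m => Nat.rec
    ⟨(hal1 0).choose, (hal1 0).choose_spec⟩
    (fun n prev => ⟨(hal2 n prev.1 prev.2).choose,
      (hal2 n prev.1 prev.2).choose_spec.1⟩) m with hbs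
  have hbreach : ∀ m, ReachIn (Qg L S₀) (W m)ᶜ (bs m).1 (bs (m + 1)).1 := by
    intro m
    exact (hal2 m (bs m).1 (bs m).2).choose_spec.2
  -- lift to the Cayley graph
  have hbsC : ∀ m, (bs m).1 ∈ qm L '' C := fun m => (bs m).2.1.1
  set cs : ∀ m : ℕ, {p : G // p ∈ C ∧ qm L p = (bs m).1} := fun m => Nat.rec
    ⟨(hbsC 0).choose, (hbsC 0).choose_spec.1, (hbsC 0).choose_spec.2⟩
    (fun n prev =>
      ⟨(hlift n prev.1 prev.2.1 (bs n).1 (bs (n + 1)).1 prev.2.2 (hbreach n)).choose,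
        (hlift n prev.1 prev.2.1 (bs n).1 (bs (n + 1)).1 prev.2.2
          (hbreach n)).choose_spec.1,
        (hlift n prev.1 prev.2.1 (bs n).1 (bs (n + 1)).1 prev.2.2
          (hbreach n)).choose_spec.2.1⟩) m
    with hcs
  have hcreach : ∀ m, ReachIn X (L.satSet ↑(Tm m))ᶜ (cs m).1 (cs (m + 1)).1 := by
    intro m
    exact (hlift m (cs m).1 (cs m).2.1 (bs m).1 (bs (m + 1)).1 (cs m).2.2
      (hbreach m)).choose_spec.2.2
  have hsatmono : ∀ {i j : ℕ}, i ≤ j →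
      (L.satSet ↑(Tm j))ᶜ ⊆ (L.satSet (↑(Tm i) : Set G))ᶜ := fun {i j} hij =>
    Set.compl_subset_compl.mpr (L.satSet_mono (Finset.coe_subset.mpr (hTmono hij)))
  have hchain : ∀ i j, i ≤ j → ReachIn X (L.satSet ↑(Tm i))ᶜ (cs i).1 (cs j).1 := by
    intro i j hij
    induction j with
    | zero =>
      have : i = 0 := Nat.le_zero.mp hij
      subst this
      refine ReachIn.refl ?_
      intro hmem
      have h9 := (mem_satSet_finset_iff L).mp hmem
      rw [(cs 0).2.2] at h9
      exact (bs 0).2.1.2 h9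
    | succ n ih =>
      rcases Nat.lt_or_ge i (n + 1) with hlt | hge
      · have hin : i ≤ n := Nat.lt_succ_iff.mp hlt
        exact (ih hin).trans ((hcreach n).mono (hsatmono hin))
      · have : i = n + 1 := Nat.le_antisymm hij hge
        subst this
        refine ReachIn.refl ?_
        intro hmem
        have h9 := (mem_satSet_finset_iff L).mp hmem
        rw [(cs (n+1)).2.2] at h9
        exact (bs (n+1)).2.1.2 h9
  have hcnot : ∀ m, (cs m).1 ∉ L.satSet ↑(Tm m) := by
    intro m hmem
    have h9 := (mem_satSet_finset_iff L).mp hmem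
    rw [(cs m).2.2] at h9
    exact (bs m).2.1.2 h9
  -- assemble the filtered end
  set mT : Finset G → ℕ := fun T => (hcof T).choose with hmT
  have hmTs : ∀ T, T ⊆ Tm (mT T) := fun T => (hcof T).choose_spec
  have hnotin : ∀ T : Finset G, (cs (mT T)).1 ∈ ((L.satSet (↑T : Set G))ᶜ : Set G) := by
    intro T hmem
    exact hcnot (mT T) (L.satSet_mono (Finset.coe_subset.mpr (hmTs T)) hmem)
  have hreachT : ∀ (T : Finset G) (j : ℕ), mT T ≤ j →
      ReachIn X (L.satSet ↑T)ᶜ (cs (mT T)).1 (cs j).1 := by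
    intro T j hj
    exact (hchain (mT T) j hj).mono
      (Set.compl_subset_compl.mpr (L.satSet_mono (Finset.coe_subset.mpr (hmTs T))))
  refine ⟨⟨fun T => (X.induce ((L.satSet (↑T : Set G))ᶜ)).connectedComponentMk
    ⟨(cs (mT T)).1, hnotin T⟩, ?_⟩, ?_⟩
  · intro T T' hTT'
    rw [SimpleGraph.ConnectedComponent.map_mk]
    apply SimpleGraph.ConnectedComponent.sound
    have h1 : ReachIn X (L.satSet ↑T)ᶜ (cs (mT T)).1 (cs (max (mT T) (mT T'))).1 :=
      hreachT T _ (le_max_left _ _)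
    have h2 : ReachIn X (L.satSet ↑T')ᶜ (cs (mT T')).1 (cs (max (mT T) (mT T'))).1 :=
      hreachT T' _ (le_max_right _ _)
    have h2' : ReachIn X (L.satSet ↑T)ᶜ (cs (mT T')).1 (cs (max (mT T) (mT T'))).1 :=
      h2.mono (Set.compl_subset_compl.mpr (L.satSet_mono (Finset.coe_subset.mpr hTT')))
    have h3 := h2'.trans h1.symm
    obtain ⟨wlk, hwlk⟩ := h3
    exact reachIn_to_induce_reachable wlk hwlk _ _
  · intro T
    exact ⟨(cs (mT T)).1, ⟨hnotin T, rfl⟩, (cs (mT T)).2.1⟩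

/-! ### Translation of ends and membership patterns -/

theorem satSet_le {K H : Subgroup G} (hKH : K ≤ H) (S : Set G) :
    K.satSet S ⊆ H.satSet S := by
  rintro v ⟨g, hg, s, hs, rfl⟩
  exact ⟨g, hKH hg, s, hs, rfl⟩

theorem reachIn_mul {A B : Set G} (g : G) (hAB : ∀ u ∈ A, g * u ∈ B) {x y : G}
    (h : ReachIn (cayleyGraph G S₀) A x y) :
    ReachIn (cayleyGraph G S₀) B (g * x) (g * y) := by
  obtain ⟨w, hw⟩ := h
  refine ⟨w.map (mulHom S₀ g), ?_⟩
  intro u hu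
  replace hu : u ∈ w.support.map (mulHom S₀ g) :=
    (SimpleGraph.Walk.support_map (mulHom S₀ g) w).subst (motive := fun l => u ∈ l) hu
  obtain ⟨u', hu', rfl⟩ := List.mem_map.mp hu
  exact hAB u' (hw u' hu')

/-- Crossing lemma: a walk from inside a component of the complement of `K•S` to outside
must pass through `K•S`. -/
theorem cross {K : Subgroup G} {S : Finset G} {v a b : G} (w : (cayleyGraph G S₀).Walk a b)
    (ha : a ∈ CompIn (cayleyGraph G S₀) (K.satSet ↑S)ᶜ v)
    (hb : b ∉ CompIn (cayleyGraph G S₀) (K.satSet ↑S)ᶜ v) :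
    ∃ z ∈ w.support, z ∈ K.satSet ↑S := by
  obtain ⟨z, hz, hz2⟩ := exists_support_not_mem w ha hb
  exact ⟨z, hz, by simpa using hz2⟩

/-- All or nothing: translates of points reachable outside `H•S` lie on the same side
of a component of the complement of `K•S`. -/
theorem aon {K H : Subgroup G} (hKH : K ≤ H) {S : Finset G} {v : G} {g : G} (hg : g ∈ H)
    {x x' : G} (hr : ReachIn (cayleyGraph G S₀) (H.satSet ↑S)ᶜ x x') :
    g * x ∈ CompIn (cayleyGraph G S₀) (K.satSet ↑S)ᶜ v ↔
    g * x' ∈ CompIn (cayleyGraph G S₀) (K.satSet ↑S)ᶜ v := by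
  have key : ReachIn (cayleyGraph G S₀) (K.satSet ↑S)ᶜ (g * x) (g * x') := by
    refine reachIn_mul S₀ g ?_ hr
    intro u hu hmem
    exact hu ((satSet_mul_mem H hg).mp (satSet_le hKH _ hmem))
  constructor
  · intro hx
    exact ReachIn.trans hx key
  · intro hx
    exact ReachIn.trans hx key.symm

/-- The translation homomorphism on the induced complement graph. -/
def transHom (H : Subgroup G) (g : G) (hg : g ∈ H) (T : Finset G) :
    (cayleyGraph G S₀).induce ((H.satSet (↑T : Set G))ᶜ) →g
    (cayleyGraph G S₀).induce ((H.satSet (↑T : Set G))ᶜ) where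
  toFun x := ⟨g * x.1, fun hmem => x.2 ((satSet_mul_mem H hg).mp hmem)⟩
  map_rel' := by
    rintro ⟨x, hx⟩ ⟨y, hy⟩ hadj
    exact (cayley_adj_mul S₀).mpr hadj

/-- Translation of a filtered end by an element of `H`. -/
def translateEnd (H : Subgroup G) (g : G) (hg : g ∈ H)
    (f : filteredEnds (cayleyGraph G S₀) H) : filteredEnds (cayleyGraph G S₀) H := by
  refine ⟨fun T => (f.1 T).map (transHom S₀ H g hg T), ?_⟩
  intro T T' hTT'
  dsimp only
  have h2 := f.2 hTT'
  rw [← h2]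
  obtain ⟨⟨x, hx⟩, hmk⟩ := (f.1 T').exists_rep
  rw [← hmk]
  rfl

theorem inComp_translateEnd {H : Subgroup G} {g : G} {hg : g ∈ H}
    {f : filteredEnds (cayleyGraph G S₀) H} {T : Finset G} {x : G}
    (h : inComp H S₀ f T x) : inComp H S₀ (translateEnd S₀ H g hg f) T (g * x) := by
  obtain ⟨hx, hmk⟩ := h
  refine ⟨fun hmem => hx ((satSet_mul_mem H hg).mp hmem), ?_⟩
  show _ = (f.1 T).map (transHom S₀ H g hg T)
  rw [← hmk, SimpleGraph.ConnectedComponent.map_mk]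
  rfl

/-- The membership pattern of an end relative to a component `C`. -/
def pat (K H : Subgroup G) (C : Set G) (f : filteredEnds (cayleyGraph G S₀) H) (S : Finset G)
    (h : G) : Prop :=
  ∃ x, inComp H S₀ f S x ∧ h * x ∈ C

theorem patIff {K H : Subgroup G} (hKH : K ≤ H) {S : Finset G} {v : G}
    {f : filteredEnds (cayleyGraph G S₀) H} {h : G} (hh : h ∈ H) {x₀ : G}
    (hx₀ : inComp H S₀ f S x₀) :
    pat S₀ K H (CompIn (cayleyGraph G S₀) (K.satSet ↑S)ᶜ v) f S h ↔
    h * x₀ ∈ CompIn (cayleyGraph G S₀) (K.satSet ↑S)ᶜ v := by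
  constructor
  · rintro ⟨x, hx, hmem⟩
    exact (aon S₀ hKH hh (reach_of_inComp H S₀ hx hx₀)).mp hmem
  · intro hmem
    exact ⟨x₀, hx₀, hmem⟩

theorem pat_translate {K H : Subgroup G} (hKH : K ≤ H) {S : Finset G} {v : G}
    {f : filteredEnds (cayleyGraph G S₀) H} {g h : G} (hg : g ∈ H) (hh : h ∈ H) :
    pat S₀ K H (CompIn (cayleyGraph G S₀) (K.satSet ↑S)ᶜ v) (translateEnd S₀ H g hg f) S h ↔
    pat S₀ K H (CompIn (cayleyGraph G S₀) (K.satSet ↑S)ᶜ v) f S (h * g) := by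
  obtain ⟨x₀, hx₀⟩ := inComp_exists H S₀ f S
  have h1 := patIff S₀ hKH (v := v) hh (inComp_translateEnd S₀ (hg := hg) hx₀)
  have h2 := patIff S₀ hKH (v := v) (H.mul_mem hh hg) hx₀
  rw [h1, h2, mul_assoc]

/-! ### The two contradiction engines -/

theorem mem_satSet_elts {K : Subgroup G} {S : Set G} {z : G} (h : z ∈ K.satSet S) :
    ∃ k ∈ K, ∃ s ∈ S, k * s = z := by
  obtain ⟨k, hk, s, hs, hz⟩ := h
  exact ⟨k, hk, s, hs, by rw [← hz]; exact (smul_eq_mul k s).symm ▸ rfl⟩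

/-- An unbounded set misses every saturation of a finite set, so we can extract arbitrarily
many points in pairwise distinct right `K`-cosets. -/
theorem escape_seq {K : Subgroup G} {C : Set G}
    (hunb : ∀ T : Finset G, ¬ C ⊆ K.satSet ↑T) (m : ℕ) :
    ∃ ys : ℕ → G, (∀ i < m, ys i ∈ C) ∧
      (∀ i j, i < m → j < m → i ≠ j → ys i * (ys j)⁻¹ ∉ K) := by
  classical
  induction m with
  | zero => exact ⟨fun _ => 1, by omega, by omega⟩
  | succ n ih =>
    obtain ⟨ys, hysC, hysK⟩ := ih
    have h1 : ¬ C ⊆ K.satSet ↑((Finset.range n).image ys) := hunb _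
    rw [Set.not_subset] at h1
    obtain ⟨y, hyC, hynot⟩ := h1
    refine ⟨fun i => if i = n then y else ys i, ?_, ?_⟩
    · intro i hi
      by_cases hin : i = n
      · simpa [hin] using hyC
      · have : i < n := by omega
        simpa [hin] using hysC i this
    · intro i j hi hj hij
      have key : ∀ a < n, ¬ y * (ys a)⁻¹ ∈ K := by
        intro a ha hmem
        apply hynot
        refine ⟨y * (ys a)⁻¹, hmem, ys a, ?_, ?_⟩
        · exact Finset.mem_coe.mpr (Finset.mem_image.mpr ⟨a, Finset.mem_range.mpr ha, rfl⟩)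
        · rw [smul_eq_mul]; group
      by_cases hin : i = n
      · have hjn : j ≠ n := by omega
        have hj' : j < n := by omega
        simpa [hin, hjn] using key j hj'
      · by_cases hjn : j = n
        · have hi' : i < n := by omega
          simp only [hin, hjn, if_neg, if_pos]
          intro hmem
          have h5 : (ys i * y⁻¹)⁻¹ ∈ K := K.inv_mem (by simpa using hmem)
          have h6 : y * (ys i)⁻¹ ∈ K := by
            have : (ys i * y⁻¹)⁻¹ = y * (ys i)⁻¹ := by group
            rwa [this] at h5
          exact key i hi' h6
        · have hi' : i < n := by omega
          have hj' : j < n := by omega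
          simpa [hin, hjn] using hysK i j hi' hj' hij

theorem helperB (hgen : Subgroup.closure (S₀ : Set G) = ⊤) (K H : Subgroup G) (hKH : K ≤ H)
    (S : Finset G) (u : G) (hu : u ∉ K.satSet ↑S)
    (hunb : ∀ T : Finset G, ¬ CompIn (cayleyGraph G S₀) (K.satSet ↑S)ᶜ u ⊆ K.satSet ↑T)
    (f₀ : filteredEnds (cayleyGraph G S₀) H)
    (hallout : ∀ f : filteredEnds (cayleyGraph G S₀) H,
      ¬ pat S₀ K H (CompIn (cayleyGraph G S₀) (K.satSet ↑S)ᶜ u) f S 1) : False := by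
  classical
  obtain ⟨x₀, hx₀⟩ := inComp_exists H S₀ f₀ S
  have hpre := cayley_preconnected S₀ hgen
  have hηx : ∀ ηe : G, ηe ∈ H →
      ηe * x₀ ∉ CompIn (cayleyGraph G S₀) (K.satSet ↑S)ᶜ u := by
    intro ηe hη
    have h1 := hallout (translateEnd S₀ H ηe hη f₀)
    rw [pat_translate S₀ hKH hη H.one_mem, one_mul] at h1
    intro hmem
    exact h1 ((patIff S₀ hKH hη hx₀).mpr hmem)
  by_cases hbdd : ∃ T₁ : Finset G, CompIn (cayleyGraph G S₀) (K.satSet ↑S)ᶜ u ⊆ H.satSet ↑T₁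
  · obtain ⟨T₁, hT₁⟩ := hbdd
    have wf : ∀ t : G, (cayleyGraph G S₀).Walk t x₀ := fun t => (hpre t x₀).some
    set Tgt : Finset (G × G × G) :=
      T₁ ×ˢ ((T₁.biUnion (fun t' => (wf t').support.toFinset)) ×ˢ S) with hTgt
    set M := Tgt.card + 1 with hM
    obtain ⟨ys, hysC, hysK⟩ := escape_seq (K := K) hunb M
    have hdata : ∀ i : Fin M, ∃ te ηe pe se ke : G, te ∈ T₁ ∧ ηe ∈ H ∧ ηe * te = ys i ∧
        pe ∈ (wf te).support ∧ se ∈ S ∧ ke ∈ K ∧ ke * se = ηe * pe := by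
      intro i
      have hyC : ys i ∈ CompIn (cayleyGraph G S₀) (K.satSet ↑S)ᶜ u := hysC i i.2
      obtain ⟨ηe, hη, te, ht, hηt⟩ := mem_satSet_elts (hT₁ hyC)
      have hb : ηe * x₀ ∉ CompIn (cayleyGraph G S₀) (K.satSet ↑S)ᶜ u := hηx ηe hη
      have ha' : ηe * te ∈ CompIn (cayleyGraph G S₀) (K.satSet ↑S)ᶜ u := by
        rw [hηt]; exact hyC
      obtain ⟨z, hz, hzK⟩ := cross S₀ ((wf te).map (mulHom S₀ ηe)) ha' hb
      rw [SimpleGraph.Walk.support_map] at hz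
      obtain ⟨pe, hpmem, rfl⟩ := List.mem_map.mp hz
      obtain ⟨ke, hkmem, se, hsmem, hks⟩ := mem_satSet_elts hzK
      exact ⟨te, ηe, pe, se, ke, ht, hη, hηt, hpmem, hsmem, hkmem, hks⟩
    choose tf ηf pf sf kf htf hηf hηtf hpf hsf hkf hksf using hdata
    have hmaps : ∀ i : Fin M, i ∈ (Finset.univ : Finset (Fin M)) →
        (tf i, pf i, sf i) ∈ Tgt := by
      intro i _
      refine Finset.mem_product.mpr ⟨htf i, Finset.mem_product.mpr ⟨?_, hsf i⟩⟩
      exact Finset.mem_biUnion.mpr ⟨tf i, htf i, List.mem_toFinset.mpr (hpf i)⟩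
    have hcard : Tgt.card < (Finset.univ : Finset (Fin M)).card := by
      rw [Finset.card_univ, Fintype.card_fin]
      omega
    obtain ⟨i, -, j, -, hij, heq⟩ :=
      Finset.exists_ne_map_eq_of_card_lt_of_maps_to hcard hmaps
    simp only [Prod.mk.injEq] at heq
    obtain ⟨hte, hpe, hse⟩ := heq
    have e1 : ηf i = kf i * sf i * (pf i)⁻¹ := by
      have h7 : ηf i * pf i = kf i * sf i := (hksf i).symm
      rw [eq_mul_inv_iff_mul_eq]
      exact h7
    have e2 : ηf j = kf j * sf j * (pf j)⁻¹ := by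
      have h7 : ηf j * pf j = kf j * sf j := (hksf j).symm
      rw [eq_mul_inv_iff_mul_eq]
      exact h7
    have hKmem : ys i * (ys j)⁻¹ ∈ K := by
      have e3 : ys i * (ys j)⁻¹ = kf i * (kf j)⁻¹ := by
        rw [← hηtf i, ← hηtf j, hte, e1, e2, hpe, hse]
        group
      rw [e3]
      exact K.mul_mem (hkf i) (K.inv_mem (hkf j))
    exact hysK i j i.2 j.2 (fun hv => hij (Fin.ext hv)) hKmem
  · push_neg at hbdd
    obtain ⟨T', hT'⟩ := bounded_union H S₀ hgen S
    have h2 := hbdd (S ∪ T')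
    rw [Set.not_subset] at h2
    obtain ⟨z, hzC, hznot⟩ := h2
    have hz_nS : z ∉ H.satSet ↑S := fun hmem =>
      hznot (H.satSet_mono (by simp) hmem)
    have hz_nT' : z ∉ H.satSet ↑T' := fun hmem =>
      hznot (H.satSet_mono (by simp) hmem)
    have hDunb : ∀ T'' : Finset G,
        ¬ CompIn (cayleyGraph G S₀) (H.satSet ↑S)ᶜ z ⊆ H.satSet ↑T'' := by
      intro T'' hsub
      exact hz_nT' (hT' z hz_nS ⟨T'', hsub⟩ (CompIn.self_mem hz_nS))
    obtain ⟨fst, hfst⟩ := endcomp H S₀ hgen S z hDunb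
    obtain ⟨xst, hxin, hxD⟩ := hfst S
    have hxC : xst ∈ CompIn (cayleyGraph G S₀) (K.satSet ↑S)ᶜ u := by
      have hr : ReachIn (cayleyGraph G S₀) (K.satSet ↑S)ᶜ z xst :=
        hxD.mono (Set.compl_subset_compl.mpr (satSet_le hKH ↑S))
      exact ReachIn.trans hzC hr
    exact hallout fst ⟨xst, hxin, by rw [one_mul]; exact hxC⟩

theorem finite_quot_of_cover (K H : Subgroup G) (PF : Finset G)
    (hcov : ∀ g ∈ H, ∃ p ∈ PF, p ∈ H ∧ p⁻¹ * g ∈ K) :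
    Finite (H ⧸ K.subgroupOf H) := by
  classical
  have hsurj : ∀ q : H ⧸ K.subgroupOf H, ∃ p : PF, q =
      (if hp : (p : G) ∈ H then QuotientGroup.mk (⟨p, hp⟩ : H) else
        QuotientGroup.mk 1) := by
    intro q
    obtain ⟨⟨g, hg⟩, rfl⟩ := QuotientGroup.mk_surjective q
    obtain ⟨p, hpPF, hpH, hpK⟩ := hcov g hg
    refine ⟨⟨p, hpPF⟩, ?_⟩
    rw [dif_pos hpH]
    apply (QuotientGroup.eq).mpr
    rw [Subgroup.mem_subgroupOf]
    have h8 : (p⁻¹ * g)⁻¹ ∈ K := K.inv_mem hpK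
    rw [mul_inv_rev, inv_inv] at h8
    simpa using h8
  have : Function.Surjective (fun p : PF =>
      (if hp : (p : G) ∈ H then QuotientGroup.mk (⟨p, hp⟩ : H) else
        (QuotientGroup.mk 1 : H ⧸ K.subgroupOf H))) := by
    intro q
    obtain ⟨p, hp⟩ := hsurj q
    exact ⟨p, hp.symm⟩
  exact Finite.of_surjective _ this

theorem helperA (hgen : Subgroup.closure (S₀ : Set G) = ⊤) (K H : Subgroup G) (hKH : K ≤ H)
    (hidx : Infinite (H ⧸ K.subgroupOf H))
    (hfinE : Finite (filteredEnds (cayleyGraph G S₀) H))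
    (S : Finset G) (u : G)
    (f₁ f₂ : filteredEnds (cayleyGraph G S₀) H)
    (h1 : pat S₀ K H (CompIn (cayleyGraph G S₀) (K.satSet ↑S)ᶜ u) f₁ S 1)
    (h2 : ¬ pat S₀ K H (CompIn (cayleyGraph G S₀) (K.satSet ↑S)ᶜ u) f₂ S 1) : False := by
  classical
  set C := CompIn (cayleyGraph G S₀) (K.satSet ↑S)ᶜ u with hCdef
  set H₀ : Set G := {g | g ∈ H ∧ ∀ hh, hh ∈ H →
      ((pat S₀ K H C f₁ S (hh * g) ↔ pat S₀ K H C f₁ S hh) ∧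
       (pat S₀ K H C f₂ S (hh * g) ↔ pat S₀ K H C f₂ S hh))} with hH₀def
  have hH₀H : ∀ g ∈ H₀, g ∈ H := fun g hg => hg.1
  have hH₀inv : ∀ g ∈ H₀, g⁻¹ ∈ H₀ := by
    rintro g ⟨hgH, hg⟩
    refine ⟨H.inv_mem hgH, ?_⟩
    intro hh hhH
    have h3 := hg (hh * g⁻¹) (H.mul_mem hhH (H.inv_mem hgH))
    rw [mul_assoc, inv_mul_cancel, mul_one] at h3
    exact ⟨h3.1.symm, h3.2.symm⟩
  -- the translation map into the (finite) set of pairs of ends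
  set μ : {g : G // g ∈ H} → (filteredEnds (cayleyGraph G S₀) H) ×
      (filteredEnds (cayleyGraph G S₀) H) := fun g =>
    (translateEnd S₀ H g.1 g.2 f₁, translateEnd S₀ H g.1 g.2 f₂) with hμdef
  have hkey : ∀ (g₀ g : {g : G // g ∈ H}), μ g₀ = μ g → (g₀.1)⁻¹ * g.1 ∈ H₀ := by
    rintro ⟨g₀, hg₀⟩ ⟨g, hg⟩ hμ
    simp only [hμdef, Prod.mk.injEq] at hμ
    obtain ⟨hμ1, hμ2⟩ := hμ
    refine ⟨H.mul_mem (H.inv_mem hg₀) hg, ?_⟩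
    intro hh hhH
    have hu' : hh * g₀⁻¹ ∈ H := H.mul_mem hhH (H.inv_mem hg₀)
    constructor
    · have e1 := pat_translate S₀ hKH (S := S) (v := u) (f := f₁) hg₀ hu'
      have e2 := pat_translate S₀ hKH (S := S) (v := u) (f := f₁) hg hu'
      rw [hμ1] at e1
      have ha1 : hh * (g₀⁻¹ * g) = hh * g₀⁻¹ * g := by group
      have ha2 : hh * g₀⁻¹ * g₀ = hh := by group
      rw [ha1, ← e2, e1, ha2]
    · have e1 := pat_translate S₀ hKH (S := S) (v := u) (f := f₂) hg₀ hu'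
      have e2 := pat_translate S₀ hKH (S := S) (v := u) (f := f₂) hg hu'
      rw [hμ2] at e1
      have ha1 : hh * (g₀⁻¹ * g) = hh * g₀⁻¹ * g := by group
      have ha2 : hh * g₀⁻¹ * g₀ = hh := by group
      rw [ha1, ← e2, e1, ha2]
  -- finitely many cosets of H₀ cover H
  have hcover : ∃ F : Finset G, ∀ g ∈ H, ∃ x ∈ F, x ∈ H ∧ x⁻¹ * g ∈ H₀ := by
    haveI := hfinE
    have hfinp : (Set.range μ).Finite := Set.toFinite _
    set ρ : (filteredEnds (cayleyGraph G S₀) H) × (filteredEnds (cayleyGraph G S₀) H) → G :=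
      fun pr => if h : ∃ gg : {g : G // g ∈ H}, μ gg = pr then (Classical.choose h).1 else 1
      with hρdef
    refine ⟨hfinp.toFinset.image ρ, ?_⟩
    intro g hg
    have hex : ∃ gg : {g' : G // g' ∈ H}, μ gg = μ ⟨g, hg⟩ := ⟨⟨g, hg⟩, rfl⟩
    refine ⟨ρ (μ ⟨g, hg⟩), ?_, ?_, ?_⟩
    · exact Finset.mem_image.mpr ⟨μ ⟨g, hg⟩, hfinp.mem_toFinset.mpr ⟨⟨g, hg⟩, rfl⟩, rfl⟩
    · rw [hρdef]
      simp only [dif_pos hex]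
      exact (Classical.choose hex).2
    · have := hkey (Classical.choose hex) ⟨g, hg⟩ (Classical.choose_spec hex)
      rw [hρdef]
      simp only [dif_pos hex]
      exact this
  obtain ⟨F, hF⟩ := hcover
  -- arbitrarily many elements of H₀ in pairwise distinct left K-cosets
  have hgseq : ∀ m : ℕ, ∃ gs : ℕ → G, (∀ i < m, gs i ∈ H₀) ∧
      (∀ i j, i < m → j < m → i ≠ j → (gs i)⁻¹ * gs j ∉ K) := by
    intro m
    induction m with
    | zero => exact ⟨fun _ => 1, by omega, by omega⟩
    | succ n ih =>
      obtain ⟨gs, hgsH, hgsK⟩ := ih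
      -- find a new element of H₀ in a fresh coset
      have hnew : ∃ g ∈ H₀, ∀ i < n, (gs i)⁻¹ * g ∉ K := by
        by_contra hno
        push_neg at hno
        have hcov : ∀ g ∈ H, ∃ p ∈ (F ×ˢ (Finset.range n).image gs).image
            (fun pr => pr.1 * pr.2), p ∈ H ∧ p⁻¹ * g ∈ K := by
          intro g hg
          obtain ⟨x, hxF, hxH, hxg⟩ := hF g hg
          obtain ⟨i, hin, hik⟩ := hno (x⁻¹ * g) hxg
          refine ⟨x * gs i, ?_, ?_, ?_⟩
          · exact Finset.mem_image.mpr ⟨(x, gs i), Finset.mem_product.mpr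
              ⟨hxF, Finset.mem_image.mpr ⟨i, Finset.mem_range.mpr hin, rfl⟩⟩, rfl⟩
          · exact H.mul_mem hxH (hH₀H _ (hgsH i hin))
          · have : (x * gs i)⁻¹ * g = (gs i)⁻¹ * (x⁻¹ * g) := by group
            rw [this]
            exact hik
        have hfq := finite_quot_of_cover K H _ hcov
        haveI := hidx
        haveI := hfq
        exact not_finite (H ⧸ K.subgroupOf H)
      obtain ⟨g, hgH₀, hgfresh⟩ := hnew
      refine ⟨fun i => if i = n then g else gs i, ?_, ?_⟩
      · intro i hi
        by_cases hin : i = n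
        · simpa [hin] using hgH₀
        · have : i < n := by omega
          simpa [hin] using hgsH i this
      · intro i j hi hj hij
        by_cases hin : i = n
        · have hjn : j ≠ n := by omega
          have hj' : j < n := by omega
          simp only [hin, hjn, if_pos, if_neg]
          intro hmem
          have h5 : (g⁻¹ * gs j)⁻¹ ∈ K := K.inv_mem (by simpa using hmem)
          have h6 : (gs j)⁻¹ * g ∈ K := by
            have e : (g⁻¹ * gs j)⁻¹ = (gs j)⁻¹ * g := by group
            rwa [e] at h5
          exact hgfresh j hj' h6
        · by_cases hjn : j = n
          · have hi' : i < n := by omega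
            simp only [hin, hjn, if_neg, if_pos]
            intro hmem
            exact hgfresh i hi' (by simpa using hmem)
          · have hi' : i < n := by omega
            have hj' : j < n := by omega
            simpa [hin, hjn] using hgsK i j hi' hj' hij
  -- representatives on both sides of C
  obtain ⟨x₁, hin1, hmem1⟩ := h1
  rw [one_mul] at hmem1
  obtain ⟨x₂, hin2⟩ := inComp_exists H S₀ f₂ S
  have hmem2 : x₂ ∉ C := by
    intro hmem
    exact h2 ⟨x₂, hin2, by rw [one_mul]; exact hmem⟩
  have hpre := cayley_preconnected S₀ hgen
  have wk : (cayleyGraph G S₀).Walk x₁ x₂ := (hpre x₁ x₂).some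
  set M := (wk.support.toFinset ×ˢ S).card + 1 with hM
  obtain ⟨gs, hgsH₀, hgsK⟩ := hgseq M
  -- for each i, the translate by (gs i)⁻¹ gives a crossing of K•S
  have hdata : ∀ i : Fin M, ∃ pe se ke : G, pe ∈ wk.support ∧ se ∈ S ∧ ke ∈ K ∧
      ke * se = (gs i)⁻¹ * pe := by
    intro i
    set w := (gs i)⁻¹ with hwdef
    have hwH₀ : w ∈ H₀ := hH₀inv _ (hgsH₀ i i.2)
    have hwH : w ∈ H := hH₀H _ hwH₀
    have hpat := hwH₀.2 1 H.one_mem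
    rw [one_mul] at hpat
    have hp1 : pat S₀ K H C f₁ S w := by
      rw [hpat.1]
      exact ⟨x₁, hin1, by rw [one_mul]; exact hmem1⟩
    have hp2 : ¬ pat S₀ K H C f₂ S w := by
      rw [hpat.2]
      exact h2
    have hwx₁ : w * x₁ ∈ C := (patIff S₀ hKH hwH hin1).mp hp1
    have hwx₂ : w * x₂ ∉ C := fun hmem => hp2 ((patIff S₀ hKH hwH hin2).mpr hmem)
    obtain ⟨z, hz, hzK⟩ := cross S₀ (wk.map (mulHom S₀ w)) hwx₁ hwx₂
    rw [SimpleGraph.Walk.support_map] at hz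
    obtain ⟨pe, hpmem, rfl⟩ := List.mem_map.mp hz
    obtain ⟨ke, hkmem, se, hsmem, hks⟩ := mem_satSet_elts hzK
    exact ⟨pe, se, ke, hpmem, hsmem, hkmem, hks⟩
  choose pf sf kf hpf hsf hkf hksf using hdata
  have hmaps : ∀ i : Fin M, i ∈ (Finset.univ : Finset (Fin M)) →
      (pf i, sf i) ∈ wk.support.toFinset ×ˢ S := by
    intro i _
    exact Finset.mem_product.mpr ⟨List.mem_toFinset.mpr (hpf i), hsf i⟩
  have hcard : (wk.support.toFinset ×ˢ S).card < (Finset.univ : Finset (Fin M)).card := by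
    rw [Finset.card_univ, Fintype.card_fin]
    omega
  obtain ⟨i, -, j, -, hij, heq⟩ :=
    Finset.exists_ne_map_eq_of_card_lt_of_maps_to hcard hmaps
  simp only [Prod.mk.injEq] at heq
  obtain ⟨hpe, hse⟩ := heq
  have e1 : (gs i)⁻¹ = kf i * sf i * (pf i)⁻¹ := by
    rw [eq_mul_inv_iff_mul_eq]
    exact (hksf i).symm
  have e2 : (gs j)⁻¹ = kf j * sf j * (pf j)⁻¹ := by
    rw [eq_mul_inv_iff_mul_eq]
    exact (hksf j).symm
  have hKmem : (gs i)⁻¹ * gs j ∈ K := by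
    have e3 : (gs i)⁻¹ * gs j = kf i * (kf j)⁻¹ := by
      have e4 : gs j = ((gs j)⁻¹)⁻¹ := by group
      rw [e4, e1, e2, hpe, hse]
      group
    rw [e3]
    exact K.mul_mem (hkf i) (K.inv_mem (hkf j))
  exact hgsK i j i.2 j.2 (fun hv => hij (Fin.ext hv)) hKmem

/-- Core lemma: any two points of unbounded components of the complement of `K•S` are
connected within that complement. -/
theorem core (hgen : Subgroup.closure (S₀ : Set G) = ⊤) (K H : Subgroup G) (hKH : K ≤ H)
    (hidx : Infinite (H ⧸ K.subgroupOf H))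
    (hfinE : Finite (filteredEnds (cayleyGraph G S₀) H))
    (f₀ : filteredEnds (cayleyGraph G S₀) H)
    (S : Finset G) (v w : G)
    (hv : v ∉ K.satSet ↑S) (hw : w ∉ K.satSet ↑S)
    (hvunb : ∀ T : Finset G, ¬ CompIn (cayleyGraph G S₀) (K.satSet ↑S)ᶜ v ⊆ K.satSet ↑T)
    (hwunb : ∀ T : Finset G, ¬ CompIn (cayleyGraph G S₀) (K.satSet ↑S)ᶜ w ⊆ K.satSet ↑T) :
    ReachIn (cayleyGraph G S₀) (K.satSet ↑S)ᶜ v w := by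
  by_contra hvw
  by_cases hEx2v : ∃ f : filteredEnds (cayleyGraph G S₀) H,
      ¬ pat S₀ K H (CompIn (cayleyGraph G S₀) (K.satSet ↑S)ᶜ v) f S 1
  · obtain ⟨f₂, hf₂⟩ := hEx2v
    by_cases hEx1v : ∃ f : filteredEnds (cayleyGraph G S₀) H,
        pat S₀ K H (CompIn (cayleyGraph G S₀) (K.satSet ↑S)ᶜ v) f S 1
    · obtain ⟨f₁, hf₁⟩ := hEx1v
      exact helperA S₀ hgen K H hKH hidx hfinE S v f₁ f₂ hf₁ hf₂
    · push_neg at hEx1v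
      exact helperB S₀ hgen K H hKH S v hv hvunb f₀ hEx1v
  · push_neg at hEx2v
    by_cases hEx2w : ∃ f : filteredEnds (cayleyGraph G S₀) H,
        ¬ pat S₀ K H (CompIn (cayleyGraph G S₀) (K.satSet ↑S)ᶜ w) f S 1
    · obtain ⟨f₂, hf₂⟩ := hEx2w
      by_cases hEx1w : ∃ f : filteredEnds (cayleyGraph G S₀) H,
          pat S₀ K H (CompIn (cayleyGraph G S₀) (K.satSet ↑S)ᶜ w) f S 1
      · obtain ⟨f₁, hf₁⟩ := hEx1w
        exact helperA S₀ hgen K H hKH hidx hfinE S w f₁ f₂ hf₁ hf₂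
      · push_neg at hEx1w
        exact helperB S₀ hgen K H hKH S w hw hwunb f₀ hEx1w
    · push_neg at hEx2w
      obtain ⟨x, hinx, hmemx⟩ := hEx2v f₀
      obtain ⟨y, hiny, hmemy⟩ := hEx2w f₀
      rw [one_mul] at hmemx hmemy
      have hxy : ReachIn (cayleyGraph G S₀) (K.satSet ↑S)ᶜ x y :=
        (reach_of_inComp H S₀ hinx hiny).mono
          (Set.compl_subset_compl.mpr (satSet_le hKH ↑S))
      exact hvw ((ReachIn.trans hmemx hxy).trans (ReachIn.symm hmemy))
end FE

/-- For a finitely generated group `G` and subgroups `K ≤ H ≤ G` with `[H:K]` infinite,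
if `e(G,H)` is finite and nonzero then `e(G,K) = 1`. -/
theorem stmt1 {G : Type} [Group G] (S₀ : Finset G)
    (hgen : Subgroup.closure (S₀ : Set G) = ⊤)
    (K H : Subgroup G) (hKH : K ≤ H)
    (hidx : Infinite (H ⧸ K.subgroupOf H))
    (hpos : Cardinal.mk (filteredEnds (cayleyGraph G S₀) H) ≠ 0)
    (hfin : Cardinal.mk (filteredEnds (cayleyGraph G S₀) H) < Cardinal.aleph0) :
    Cardinal.mk (filteredEnds (cayleyGraph G S₀) K) = 1 := by
  classical
  have hfinE : Finite (filteredEnds (cayleyGraph G S₀) H) :=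
    Cardinal.lt_aleph0_iff_finite.mp hfin
  obtain ⟨f₀⟩ := Cardinal.mk_ne_zero_iff.mp hpos
  rw [Cardinal.eq_one_iff_unique]
  constructor
  · constructor
    intro f g
    apply Subtype.ext
    funext T
    obtain ⟨T', hT'⟩ := FE.bounded_union K S₀ hgen T
    obtain ⟨x, hx⟩ := FE.inComp_exists K S₀ f (T ∪ T')
    obtain ⟨y, hy⟩ := FE.inComp_exists K S₀ g (T ∪ T')
    have hxT : FE.inComp K S₀ f T x :=
      FE.inComp_mono K S₀ Finset.subset_union_left hx
    have hyT : FE.inComp K S₀ g T y :=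
      FE.inComp_mono K S₀ Finset.subset_union_left hy
    have hxn : x ∉ K.satSet ↑T := hxT.1
    have hyn : y ∉ K.satSet ↑T := hyT.1
    have hxunb : ∀ T'' : Finset G,
        ¬ FE.CompIn (cayleyGraph G S₀) (K.satSet ↑T)ᶜ x ⊆ K.satSet ↑T'' := by
      intro T'' hsub
      have hmem := hT' x hxn ⟨T'', hsub⟩ (FE.CompIn.self_mem hxn)
      exact hx.1 (K.satSet_mono
        (Finset.coe_subset.mpr Finset.subset_union_right) hmem)
    have hyunb : ∀ T'' : Finset G,
        ¬ FE.CompIn (cayleyGraph G S₀) (K.satSet ↑T)ᶜ y ⊆ K.satSet ↑T'' := by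
      intro T'' hsub
      have hmem := hT' y hyn ⟨T'', hsub⟩ (FE.CompIn.self_mem hyn)
      exact hy.1 (K.satSet_mono
        (Finset.coe_subset.mpr Finset.subset_union_right) hmem)
    have hreach := FE.core S₀ hgen K H hKH hidx hfinE f₀ T x y hxn hyn hxunb hyunb
    obtain ⟨hx1, hx2⟩ := hxT
    obtain ⟨hy1, hy2⟩ := hyT
    rw [← hx2, ← hy2]
    obtain ⟨wlk, hwlk⟩ := hreach
    exact SimpleGraph.ConnectedComponent.sound
      (FE.reachIn_to_induce_reachable wlk hwlk hx1 hy1)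
  · refine ⟨⟨fun T => (f₀.1 T).map ((cayleyGraph G S₀).inclHom
      (Set.compl_subset_compl.mpr (FE.satSet_le hKH ↑T))), ?_⟩⟩
    intro T T' hTT'
    dsimp only
    rw [← f₀.2 hTT']
    obtain ⟨⟨x, hx⟩, hmk⟩ := (f₀.1 T').exists_rep
    rw [← hmk]
    rfl
end

section
/- Let G be a group generated by a finite set S₀, and let K ≤ H ≤ G be subgroups with [H:K] finite. If the number of filtered ends e(G,H) equals n with n finite and nonzero, then e(G,K) = n. -/
open SimpleGraph

section Aux
open Pointwise
variable {G : Type} [Group G] [DecidableEq G]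

lemma aux_map_inclHom_refl {V : Type*} (Y : SimpleGraph V) {W : Set V} (h : W ⊆ W)
    (C : (Y.induce W).ConnectedComponent) : C.map (Y.inclHom h) = C := by
  refine C.ind fun v => ?_
  rfl

lemma aux_transversal (K H : Subgroup G) (hKH : K ≤ H) (hidx : Finite (H ⧸ K.subgroupOf H)) :
    ∃ T : Finset G, ∀ S : Finset G, (K.satSet ↑(T • S ∪ S) : Set G) = H.satSet ↑S := by
  haveI := hidx
  have hfin : (Set.range fun q : H ⧸ K.subgroupOf H => ((Quotient.out q : H) : G)⁻¹).Finite :=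
    Set.finite_range _
  refine ⟨hfin.toFinset, fun S => ?_⟩
  ext v
  constructor
  · rintro ⟨k, hk, t, ht, rfl⟩
    rcases Finset.mem_union.mp ht with ht | ht
    · rcases Finset.mem_smul.mp ht with ⟨a, ha, s, hs, rfl⟩
      have ha' := Set.Finite.mem_toFinset hfin |>.mp ha
      obtain ⟨q, rfl⟩ := ha'
      refine ⟨k * ((Quotient.out q : H) : G)⁻¹, ?_, s, hs, ?_⟩
      · exact H.mul_mem (hKH hk) (H.inv_mem (Quotient.out q).2)
      · simp [smul_eq_mul, mul_assoc]
    · exact ⟨k, hKH hk, t, ht, rfl⟩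
  · rintro ⟨h, hh, s, hs, rfl⟩
    set h' : H := ⟨h, hh⟩
    set q : H ⧸ K.subgroupOf H := QuotientGroup.mk h'⁻¹
    set r : H := Quotient.out q
    have hq : QuotientGroup.mk r = QuotientGroup.mk h'⁻¹ := Quotient.out_eq q
    have hmem : r⁻¹ * h'⁻¹ ∈ K.subgroupOf H := QuotientGroup.eq.mp hq
    have hK : ((h' * r : H) : G) ∈ K := by
      have := Subgroup.mem_subgroupOf.mp hmem
      have h2 : ((r⁻¹ * h'⁻¹ : H) : G)⁻¹ ∈ K := K.inv_mem this
      simpa using h2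
    refine ⟨((h' * r : H) : G), hK, ((r : H) : G)⁻¹ * s, ?_, ?_⟩
    · refine Finset.mem_union_left _ (Finset.mem_smul.mpr ⟨((r : H) : G)⁻¹, ?_, s, hs, rfl⟩)
      exact (Set.Finite.mem_toFinset hfin).mpr ⟨q, rfl⟩
    · show ((h' * r : H) : G) * (((r : H) : G)⁻¹ * s) = h * s
      push_cast
      group
      rfl

end Aux

section Main
open Pointwise
variable {G : Type} [Group G] [DecidableEq G]

lemma aux_map_incl_trans {V : Type*} (Y : SimpleGraph V) {A B C : Set V} (h1 : A ⊆ B)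
    (h2 : B ⊆ C) (D : (Y.induce A).ConnectedComponent) :
    (D.map (Y.inclHom h1)).map (Y.inclHom h2) = D.map (Y.inclHom (h1.trans h2)) := by
  rw [SimpleGraph.ConnectedComponent.map_comp]
  rfl

lemma aux_equiv (Y : SimpleGraph G) (K H : Subgroup G) (hKH : K ≤ H)
    (hidx : Finite (H ⧸ K.subgroupOf H)) :
    Nonempty (filteredEnds Y K ≃ filteredEnds Y H) := by
  obtain ⟨T, hT⟩ := aux_transversal K H hKH hidx
  have hsub : ∀ S : Finset G, S ⊆ T • S ∪ S := fun S => Finset.subset_union_right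
  have hmono : ∀ {S S' : Finset G}, S ⊆ S' → T • S ∪ S ⊆ T • S' ∪ S' := by
    intro S S' h
    exact Finset.union_subset_union (Finset.smul_subset_smul_left h) h
  have iKH : ∀ S : Finset G, ((K.satSet ↑(T • S ∪ S))ᶜ : Set G) ⊆ (H.satSet ↑S)ᶜ := by
    intro S; rw [hT S]
  have iHK : ∀ S : Finset G, ((H.satSet ↑S)ᶜ : Set G) ⊆ (K.satSet ↑(T • S ∪ S))ᶜ := by
    intro S; rw [hT S]
  have cHK : ∀ S : Finset G, ((H.satSet ↑S)ᶜ : Set G) ⊆ (K.satSet ↑S)ᶜ := by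
    intro S
    apply Set.compl_subset_compl.mpr
    rintro v ⟨g, hg, s, hs, rfl⟩
    exact ⟨g, hKH hg, s, hs, rfl⟩
  refine ⟨⟨fun f => ⟨fun S => (f.1 (T • S ∪ S)).map (Y.inclHom (iKH S)), ?_⟩,
          fun f => ⟨fun S => (f.1 S).map (Y.inclHom (cHK S)), ?_⟩, ?_, ?_⟩⟩
  · intro S S' h
    dsimp only
    rw [aux_map_incl_trans, ← f.2 (hmono h), aux_map_incl_trans]
  · intro S S' h
    dsimp only
    rw [aux_map_incl_trans, ← f.2 h, aux_map_incl_trans]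
  · intro f
    apply Subtype.ext
    funext S
    show ((f.1 (T • S ∪ S)).map (Y.inclHom (iKH S))).map (Y.inclHom (cHK S)) = f.1 S
    rw [aux_map_incl_trans]
    exact f.2 (hsub S)
  · intro f
    apply Subtype.ext
    funext S
    show ((f.1 (T • S ∪ S)).map (Y.inclHom (cHK (T • S ∪ S)))).map (Y.inclHom (iKH S)) = f.1 S
    rw [aux_map_incl_trans]
    exact f.2 (hsub S)

end Main

/-- For a finitely generated group `G` and subgroups `K ≤ H ≤ G` with `[H:K]` finite,
if `e(G,H) = n` is finite and nonzero then `e(G,K) = n`. -/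
theorem stmt2 {G : Type} [Group G] (S₀ : Finset G)
    (hgen : Subgroup.closure (S₀ : Set G) = ⊤)
    (K H : Subgroup G) (hKH : K ≤ H)
    (hidx : Finite (H ⧸ K.subgroupOf H))
    (n : ℕ) (hn : n ≠ 0)
    (hH : Cardinal.mk (filteredEnds (cayleyGraph G S₀) H) = n) :
    Cardinal.mk (filteredEnds (cayleyGraph G S₀) K) = n := by
  classical
  obtain ⟨e⟩ := aux_equiv (cayleyGraph G S₀) K H hKH hidx
  rw [← hH]
  exact Cardinal.mk_congr e
end

section
/- Let G be a group generated by a finite set S₀, and let K ≤ H ≤ G be subgroups with [G:H] infinite and [H:K] infinite. If the number of filtered ends e(G,K) is at least 2, then e(G,H) is infinite. -/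
open SimpleGraph

/-! ### Auxiliary machinery -/

section FEAux

open Pointwise

variable {G : Type} [Group G]

namespace FEAux

/-! #### Saturation basics -/

lemma mem_satSet_iff {L : Subgroup G} {A : Set G} {x : G} :
    x ∈ L.satSet A ↔ ∃ g ∈ L, ∃ a ∈ A, g * a = x := Iff.rfl

lemma subset_satSet (L : Subgroup G) (A : Set G) : A ⊆ L.satSet A := fun a ha =>
  ⟨1, L.one_mem, a, ha, one_mul a⟩

lemma satSet_satSet (L : Subgroup G) (A : Set G) : L.satSet (L.satSet A) = L.satSet A := by
  apply Set.Subset.antisymm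
  · rintro v ⟨g, hg, s, ⟨g', hg', a, ha, rfl⟩, rfl⟩
    exact ⟨g * g', L.mul_mem hg hg', a, ha, by simp [smul_eq_mul, mul_assoc]⟩
  · exact L.satSet_mono (subset_satSet L A)

lemma satSet_le {K H : Subgroup G} (hKH : K ≤ H) (A : Set G) :
    K.satSet A ⊆ H.satSet A := by
  rintro v ⟨g, hg, a, ha, rfl⟩
  exact ⟨g, hKH hg, a, ha, rfl⟩

lemma smul_mem_satSet_iff {H : Subgroup G} {h : G} (hh : h ∈ H) {A : Set G} {x : G} :
    h * x ∈ H.satSet A ↔ x ∈ H.satSet A := by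
  constructor
  · rintro ⟨g, hg, a, ha, he⟩
    refine ⟨h⁻¹ * g, H.mul_mem (H.inv_mem hh) hg, a, ha, ?_⟩
    have he' : g * a = h * x := he
    show h⁻¹ * g * a = x
    rw [mul_assoc, he']; group
  · rintro ⟨g, hg, a, ha, rfl⟩
    refine ⟨h * g, H.mul_mem hh hg, a, ha, ?_⟩
    show h * g * a = h * (g * a)
    rw [mul_assoc]

lemma smul_satSet {H : Subgroup G} {h : G} (hh : h ∈ H) (A : Set G) :
    h • (H.satSet A) = H.satSet A := by
  ext x
  rw [Set.mem_smul_set]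
  constructor
  · rintro ⟨y, hy, rfl⟩
    exact (smul_mem_satSet_iff hh).2 hy
  · intro hx
    refine ⟨h⁻¹ * x, (smul_mem_satSet_iff (H.inv_mem hh)).2 hx, ?_⟩
    show h * (h⁻¹ * x) = x
    group

lemma smul_satSet_subset {K H : Subgroup G} (hKH : K ≤ H) {h : G} (hh : h ∈ H) (A : Set G) :
    h • (K.satSet A) ⊆ H.satSet A := by
  intro x hx
  rw [Set.mem_smul_set] at hx
  obtain ⟨y, hy, rfl⟩ := hx
  exact (smul_mem_satSet_iff hh).2 (satSet_le hKH A hy)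

/-! #### Boundedness basics -/

lemma bdd_of_subset {H : Subgroup G} {A B : Set G} (hAB : A ⊆ B) (hB : H.bddSet B) :
    H.bddSet A := by
  obtain ⟨T, hT⟩ := hB
  exact ⟨T, hAB.trans hT⟩

lemma bdd_satSet_finset (H : Subgroup G) (T : Finset G) : H.bddSet (H.satSet (T : Set G)) :=
  ⟨T, subset_rfl⟩

lemma bdd_satSet_iff {H : Subgroup G} {A : Set G} :
    H.bddSet (H.satSet A) ↔ H.bddSet A := by
  constructor
  · intro hb
    exact bdd_of_subset (subset_satSet H A) hb
  · rintro ⟨T, hT⟩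
    refine ⟨T, ?_⟩
    have := H.satSet_mono hT
    rwa [satSet_satSet] at this

lemma bdd_union {H : Subgroup G} {A B : Set G} (hA : H.bddSet A) (hB : H.bddSet B) :
    H.bddSet (A ∪ B) := by
  classical
  obtain ⟨T, hT⟩ := hA
  obtain ⟨T', hT'⟩ := hB
  refine ⟨T ∪ T', Set.union_subset ?_ ?_⟩
  · exact hT.trans (H.satSet_mono (by simp [Finset.coe_union]))
  · exact hT'.trans (H.satSet_mono (by simp [Finset.coe_union]))

lemma not_bdd_univ {H : Subgroup G} (hGH : Infinite (G ⧸ H)) :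
    ¬ H.bddSet (Set.univ : Set G) := by
  rintro ⟨T, hT⟩
  have hsur : ∀ q : G ⧸ H, ∃ t ∈ T, q = QuotientGroup.mk t⁻¹ := by
    intro q
    obtain ⟨g, rfl⟩ := QuotientGroup.mk_surjective q
    obtain ⟨k, hk, t, ht, hkt⟩ := hT (Set.mem_univ g⁻¹)
    refine ⟨t, ht, ?_⟩
    rw [QuotientGroup.eq]
    have : g = t⁻¹ * k⁻¹ := by
      have : g⁻¹ = k * t := by rw [← hkt]; rfl
      rw [← inv_inv g, this]; group
    rw [this]
    simpa using H.inv_mem hk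
  classical
  have : Finite (G ⧸ H) := by
    have : Function.Surjective (fun t : {t // t ∈ T} => QuotientGroup.mk (t.1)⁻¹ : {t // t ∈ T} → G ⧸ H) := by
      intro q
      obtain ⟨t, ht, hq⟩ := hsur q
      exact ⟨⟨t, ht⟩, hq.symm⟩
    exact Finite.of_surjective _ this
  haveI := hGH
  exact not_finite (G ⧸ H)


/-! #### Cayley graph basics -/

variable (S₀ : Finset G)

lemma cayley_adj_iff {x y : G} :
    (cayleyGraph G S₀).Adj x y ↔ x ≠ y ∧ (x⁻¹ * y ∈ S₀ ∨ y⁻¹ * x ∈ S₀) := Iff.rfl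

/-- Left multiplication as a graph homomorphism of the Cayley graph. -/
def mulHom (g : G) : cayleyGraph G S₀ →g cayleyGraph G S₀ where
  toFun := fun x => g * x
  map_rel' := by
    intro x y h
    rw [cayley_adj_iff] at h ⊢
    obtain ⟨hne, hs⟩ := h
    refine ⟨fun he => hne (mul_left_cancel he), ?_⟩
    have h1 : (g * x)⁻¹ * (g * y) = x⁻¹ * y := by group
    have h2 : (g * y)⁻¹ * (g * x) = y⁻¹ * x := by group
    rw [h1, h2]
    exact hs

@[simp] lemma mulHom_apply (g x : G) : mulHom S₀ g x = g * x := rfl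

lemma reachable_mul (g : G) {x y : G} (h : (cayleyGraph G S₀).Reachable x y) :
    (cayleyGraph G S₀).Reachable (g * x) (g * y) :=
  h.map (mulHom S₀ g)

lemma cayley_preconnected (hgen : Subgroup.closure (S₀ : Set G) = ⊤) :
    (cayleyGraph G S₀).Preconnected := by
  have key : ∀ g : G, (cayleyGraph G S₀).Reachable 1 g := by
    intro g
    have hg : g ∈ Subgroup.closure (S₀ : Set G) := by rw [hgen]; trivial
    induction hg using Subgroup.closure_induction with
    | mem x hx =>
      rcases eq_or_ne (1 : G) x with h1 | h1
      · rw [← h1]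
      · exact (Adj.reachable ⟨h1, Or.inl (by simpa using hx)⟩)
    | one => rfl
    | mul x y hx hy ihx ihy =>
      refine ihx.trans ?_
      simpa using reachable_mul S₀ x ihy
    | inv x hx ih =>
      have h2 := reachable_mul S₀ x⁻¹ ih
      simp only [mul_one, inv_mul_cancel] at h2
      exact h2.symm
  intro x y
  exact (key x).symm.trans (key y)

lemma countable_of_gen (hgen : Subgroup.closure (S₀ : Set G) = ⊤) : Countable G := by
  classical
  let φ : FreeGroup {x // x ∈ S₀} →* G := FreeGroup.lift (fun s => s.1)
  haveI : Countable (FreeGroup {x // x ∈ S₀}) := FreeGroup.toWord_injective.countable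
  have hsur : Function.Surjective φ := by
    intro g
    have hmem : g ∈ Subgroup.closure (S₀ : Set G) := by rw [hgen]; trivial
    have hr : MonoidHom.range φ = Subgroup.closure (S₀ : Set G) := by
      rw [FreeGroup.range_lift_eq_closure]
      congr 1
      simp [Subtype.range_coe]
    have : g ∈ MonoidHom.range φ := by rw [hr]; exact hmem
    exact this
  exact hsur.countable

/-! #### Walks avoiding a set -/

/-- There is a walk from `x` to `y` in the Cayley graph all of whose vertices avoid `W`. -/
def AvoidReach (W : Set G) (x y : G) : Prop :=
  ∃ p : (cayleyGraph G S₀).Walk x y, ∀ v ∈ p.support, v ∉ W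

variable {S₀}

lemma AvoidReach.notMem_left {W : Set G} {x y : G} (h : AvoidReach S₀ W x y) : x ∉ W := by
  obtain ⟨p, hp⟩ := h
  exact hp x p.start_mem_support

lemma AvoidReach.notMem_right {W : Set G} {x y : G} (h : AvoidReach S₀ W x y) : y ∉ W := by
  obtain ⟨p, hp⟩ := h
  exact hp y p.end_mem_support

lemma avoid_refl {W : Set G} {x : G} (hx : x ∉ W) : AvoidReach S₀ W x x :=
  ⟨Walk.nil, by simpa using hx⟩

lemma AvoidReach.symm {W : Set G} {x y : G} (h : AvoidReach S₀ W x y) : AvoidReach S₀ W y x := by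
  obtain ⟨p, hp⟩ := h
  exact ⟨p.reverse, by intro v hv; rw [Walk.support_reverse, List.mem_reverse] at hv; exact hp v hv⟩

lemma AvoidReach.trans {W : Set G} {x y z : G} (h : AvoidReach S₀ W x y)
    (h' : AvoidReach S₀ W y z) : AvoidReach S₀ W x z := by
  obtain ⟨p, hp⟩ := h
  obtain ⟨q, hq⟩ := h'
  refine ⟨p.append q, ?_⟩
  intro v hv
  rw [Walk.mem_support_append_iff] at hv
  rcases hv with hv | hv
  · exact hp v hv
  · exact hq v hv

lemma AvoidReach.mono {W W' : Set G} (hW : W' ⊆ W) {x y : G} (h : AvoidReach S₀ W x y) :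
    AvoidReach S₀ W' x y := by
  obtain ⟨p, hp⟩ := h
  exact ⟨p, fun v hv hvW => hp v hv (hW hvW)⟩

lemma avoid_adj {W : Set G} {x y : G} (h : (cayleyGraph G S₀).Adj x y) (hx : x ∉ W)
    (hy : y ∉ W) : AvoidReach S₀ W x y := by
  refine ⟨Walk.cons h Walk.nil, ?_⟩
  intro v hv
  have hv' : v = x ∨ v = y := by
    simpa using hv
  rcases hv' with rfl | rfl
  · exact hx
  · exact hy

lemma AvoidReach.smul {W : Set G} (g : G) {x y : G} (h : AvoidReach S₀ W x y) :
    AvoidReach S₀ (g • W) (g * x) (g * y) := by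
  obtain ⟨p, hp⟩ := h
  refine ⟨p.map (mulHom S₀ g), ?_⟩
  intro v hv
  have key : ∀ v ∈ (p.map (mulHom S₀ g)).support, ∃ u ∈ p.support, mulHom S₀ g u = v := by
    intro v hv
    rw [Walk.support_map, List.mem_map] at hv
    exact hv
  obtain ⟨u, hu, rfl⟩ := key v hv
  intro hmem
  have : (g : G) • (u : G) ∈ g • W := by simpa [smul_eq_mul] using hmem
  rw [Set.smul_mem_smul_set_iff] at this
  exact hp u hu this

lemma reach_induce_of_walk {W : Set G} :
    ∀ {x y : G} (p : (cayleyGraph G S₀).Walk x y), (∀ v ∈ p.support, v ∉ W) →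
      ∀ (hx : x ∈ Wᶜ) (hy : y ∈ Wᶜ),
      ((cayleyGraph G S₀).induce Wᶜ).Reachable ⟨x, hx⟩ ⟨y, hy⟩
  | x, _, Walk.nil, _, hx, hy => Reachable.refl _
  | x, y, Walk.cons (v := b) h p, hp, hx, hy => by
    have hb : b ∈ Wᶜ := hp b (by rw [Walk.support_cons]; exact List.mem_cons_of_mem _ p.start_mem_support)
    have hstep : ((cayleyGraph G S₀).induce Wᶜ).Adj ⟨x, hx⟩ ⟨b, hb⟩ := h
    refine hstep.reachable.trans ?_
    exact reach_induce_of_walk p (fun v hv => hp v (by rw [Walk.support_cons]; exact List.mem_cons_of_mem _ hv)) hb hy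

lemma avoid_of_induce_walk {W : Set G} :
    ∀ {u v : ↥(Wᶜ)} (_ : ((cayleyGraph G S₀).induce Wᶜ).Walk u v), AvoidReach S₀ W u.1 v.1
  | u, _, Walk.nil => avoid_refl u.2
  | u, v, Walk.cons (v := b) h p =>
    (avoid_adj h u.2 b.2).trans (avoid_of_induce_walk p)

lemma avoid_iff_induce_reach {W : Set G} {x y : G} (hx : x ∉ W) (hy : y ∉ W) :
    AvoidReach S₀ W x y ↔
      ((cayleyGraph G S₀).induce Wᶜ).Reachable ⟨x, hx⟩ ⟨y, hy⟩ := by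
  constructor
  · rintro ⟨p, hp⟩
    exact reach_induce_of_walk p hp hx hy
  · rintro ⟨p⟩
    exact avoid_of_induce_walk p

lemma first_hit {W : Set G} :
    ∀ {x z : G} (_ : (cayleyGraph G S₀).Walk x z), x ∉ W → z ∈ W →
      ∃ y w, AvoidReach S₀ W x y ∧ (cayleyGraph G S₀).Adj y w ∧ w ∈ W
  | x, _, Walk.nil, hx, hz => absurd hz hx
  | x, z, Walk.cons (v := b) h p, hx, hz => by
    by_cases hb : b ∈ W
    · exact ⟨x, b, avoid_refl hx, h, hb⟩
    · obtain ⟨y, w, h1, h2, h3⟩ := first_hit p hb hz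
      exact ⟨y, w, (avoid_adj h hx hb).trans h1, h2, h3⟩


/-! #### Components and classes -/

variable (S₀)

/-- The set of vertices reachable from `x` avoiding `L • S` (the "component" of `x`). -/
def ccSet (L : Subgroup G) (S : Finset G) (x : G) : Set G :=
  {y | AvoidReach S₀ (L.satSet (S : Set G)) x y}

/-- Two vertices lie in the same class (i.e. their components have a common `L`-translate
connecting them). -/
def classRel (L : Subgroup G) (S : Finset G) (x y : G) : Prop :=
  ∃ h ∈ L, AvoidReach S₀ (L.satSet (S : Set G)) x (h * y)

variable {S₀}
variable {L : Subgroup G} {S : Finset G}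

lemma mem_ccSet_self {x : G} (hx : x ∉ L.satSet (S : Set G)) : x ∈ ccSet S₀ L S x :=
  avoid_refl hx

lemma ccSet_subset_compl (x : G) : ccSet S₀ L S x ⊆ (L.satSet (S : Set G))ᶜ := fun _ hy =>
  AvoidReach.notMem_right hy

lemma ccSet_closed {x y z : G} (hy : y ∈ ccSet S₀ L S x)
    (hyz : AvoidReach S₀ (L.satSet (S : Set G)) y z) : z ∈ ccSet S₀ L S x :=
  AvoidReach.trans hy hyz

lemma ccSet_eq_of_mem {x y : G} (hy : y ∈ ccSet S₀ L S x) :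
    ccSet S₀ L S y = ccSet S₀ L S x := by
  ext z
  exact ⟨fun hz => AvoidReach.trans hy hz, fun hz => AvoidReach.trans (AvoidReach.symm hy) hz⟩

lemma classRel_self {x : G} (hx : x ∉ L.satSet (S : Set G)) : classRel S₀ L S x x :=
  ⟨1, L.one_mem, by rw [one_mul]; exact avoid_refl hx⟩

lemma classRel_of_avoid {x y : G} (h : AvoidReach S₀ (L.satSet (S : Set G)) x y) :
    classRel S₀ L S x y :=
  ⟨1, L.one_mem, by rw [one_mul]; exact h⟩

lemma classRel_symm {x y : G} (h : classRel S₀ L S x y) : classRel S₀ L S y x := by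
  obtain ⟨h₀, hh₀, hr⟩ := h
  have hr' := hr.smul h₀⁻¹
  rw [smul_satSet (L.inv_mem hh₀)] at hr'
  refine ⟨h₀⁻¹, L.inv_mem hh₀, ?_⟩
  rw [inv_mul_cancel_left] at hr'
  exact hr'.symm

lemma classRel_trans {x y z : G} (h : classRel S₀ L S x y) (h' : classRel S₀ L S y z) :
    classRel S₀ L S x z := by
  obtain ⟨h₀, hh₀, hr⟩ := h
  obtain ⟨k₀, hk₀, hr'⟩ := h'
  have hr'' := hr'.smul h₀
  rw [smul_satSet hh₀] at hr''
  refine ⟨h₀ * k₀, L.mul_mem hh₀ hk₀, ?_⟩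
  rw [← mul_assoc] at hr''
  exact hr.trans hr''

lemma classRel_smul {x : G} (hx : x ∉ L.satSet (S : Set G)) {h : G} (hh : h ∈ L) :
    classRel S₀ L S x (h * x) := by
  refine ⟨h⁻¹, L.inv_mem hh, ?_⟩
  rw [inv_mul_cancel_left]
  exact avoid_refl hx

lemma mem_satSet_ccSet_of_classRel {x y : G} (h : classRel S₀ L S x y) :
    y ∈ L.satSet (ccSet S₀ L S x) := by
  obtain ⟨h₀, hh₀, hr⟩ := h
  exact ⟨h₀⁻¹, L.inv_mem hh₀, h₀ * y, hr, by
    show h₀⁻¹ * (h₀ * y) = y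
    rw [inv_mul_cancel_left]⟩

lemma classRel_bdd {x y : G} (h : classRel S₀ L S x y) (hb : L.bddSet (ccSet S₀ L S x)) :
    L.bddSet (ccSet S₀ L S y) := by
  have hsub : ccSet S₀ L S y ⊆ L.satSet (ccSet S₀ L S x) := by
    intro z hz
    exact mem_satSet_ccSet_of_classRel (classRel_trans h (classRel_of_avoid hz))
  exact bdd_of_subset hsub (bdd_satSet_iff.2 hb)

variable (S₀) in
/-- Candidate representatives for classes: vertices adjacent to an element of `S`. -/
def Rset [DecidableEq G] (S : Finset G) : Finset G :=
  S.biUnion (fun s => (S₀ ∪ S₀.image (·⁻¹)).image (fun t => s * t))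

lemma class_rep [DecidableEq G] (hpc : (cayleyGraph G S₀).Preconnected)
    (hS : S.Nonempty) {x : G} (hx : x ∉ L.satSet (S : Set G)) :
    ∃ r ∈ Rset S₀ S, r ∉ L.satSet (S : Set G) ∧ classRel S₀ L S x r := by
  obtain ⟨s₀, hs₀⟩ := hS
  have hs₀W : s₀ ∈ L.satSet (S : Set G) := subset_satSet L _ (by exact_mod_cast hs₀)
  obtain ⟨p⟩ := hpc x s₀
  obtain ⟨y, w, havoid, hadj, hw⟩ := first_hit p hx hs₀W
  obtain ⟨h₀, hh₀, s, hs, hes⟩ := hw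
  have hes' : h₀ * s = w := hes
  refine ⟨h₀⁻¹ * y, ?_, ?_, ?_⟩
  · -- membership in Rset
    have hadj' : (cayleyGraph G S₀).Adj (h₀⁻¹ * y) (h₀⁻¹ * w) := (mulHom S₀ h₀⁻¹).map_rel' hadj
    have hws : h₀⁻¹ * w = s := by rw [← hes']; group
    rw [hws] at hadj'
    obtain ⟨hne, hcase⟩ := hadj'
    have hsS : s ∈ S := by exact_mod_cast hs
    rw [Rset, Finset.mem_biUnion]
    refine ⟨s, hsS, ?_⟩
    rw [Finset.mem_image]
    rcases hcase with hc | hc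
    · refine ⟨((h₀⁻¹ * y)⁻¹ * s)⁻¹, ?_, by group⟩
      rw [Finset.mem_union, Finset.mem_image]
      exact Or.inr ⟨(h₀⁻¹ * y)⁻¹ * s, hc, rfl⟩
    · refine ⟨s⁻¹ * (h₀⁻¹ * y), ?_, by group⟩
      rw [Finset.mem_union]
      exact Or.inl hc
  · have hyW : y ∉ L.satSet (S : Set G) := havoid.notMem_right
    intro hmem
    have : h₀ * (h₀⁻¹ * y) ∈ L.satSet (S : Set G) := (smul_mem_satSet_iff hh₀).2 hmem
    rw [mul_inv_cancel_left] at this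
    exact hyW this
  · refine ⟨h₀, hh₀, ?_⟩
    rw [mul_inv_cancel_left]
    exact havoid

lemma bounded_part [DecidableEq G] (hpc : (cayleyGraph G S₀).Preconnected)
    (L : Subgroup G) {S : Finset G} (hS : S.Nonempty) :
    ∃ T : Finset G, ∀ x, x ∉ L.satSet (S : Set G) → L.bddSet (ccSet S₀ L S x) →
      x ∈ L.satSet (T : Set G) := by
  classical
  set Tfun : G → Finset G := fun r =>
    if hb : L.bddSet (ccSet S₀ L S r) then hb.choose else ∅ with hTfun
  refine ⟨(Rset S₀ S).biUnion Tfun, ?_⟩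
  intro x hx hbx
  obtain ⟨r, hrR, hrW, hxr⟩ := class_rep hpc hS hx
  have hbr : L.bddSet (ccSet S₀ L S r) := classRel_bdd hxr hbx
  have hspec : ccSet S₀ L S r ⊆ L.satSet (Tfun r : Set G) := by
    rw [hTfun]
    simp only [hbr, dif_pos]
    exact hbr.choose_spec
  have hxmem : x ∈ L.satSet (ccSet S₀ L S r) :=
    mem_satSet_ccSet_of_classRel (classRel_symm hxr)
  have : x ∈ L.satSet (L.satSet (Tfun r : Set G)) := L.satSet_mono hspec hxmem
  rw [satSet_satSet] at this
  refine L.satSet_mono ?_ this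
  exact_mod_cast Finset.coe_subset.2 (Finset.subset_biUnion_of_mem Tfun hrR)

lemma exists_unbounded (hpc : (cayleyGraph G S₀).Preconnected)
    {L : Subgroup G} (hGL : Infinite (G ⧸ L)) {S : Finset G} (hS : S.Nonempty) :
    ∃ x, x ∉ L.satSet (S : Set G) ∧ ¬ L.bddSet (ccSet S₀ L S x) := by
  classical
  by_contra hcon
  push_neg at hcon
  obtain ⟨T, hT⟩ := bounded_part hpc L hS
  apply not_bdd_univ hGL
  refine ⟨S ∪ T, fun v _ => ?_⟩
  by_cases hv : v ∈ L.satSet (S : Set G)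
  · exact L.satSet_mono (by exact_mod_cast Finset.coe_subset.2 Finset.subset_union_left) hv
  · have := hT v hv (hcon v hv)
    exact L.satSet_mono (by exact_mod_cast Finset.coe_subset.2 Finset.subset_union_right) this

lemma child_lemma (hpc : (cayleyGraph G S₀).Preconnected) {L : Subgroup G}
    {S S' : Finset G} (hS' : S'.Nonempty) (hSS' : S ⊆ S') {x : G}
    (hx : ¬ L.bddSet (ccSet S₀ L S x)) :
    ∃ y, y ∉ L.satSet (S' : Set G) ∧ AvoidReach S₀ (L.satSet (S : Set G)) x y ∧
      ¬ L.bddSet (ccSet S₀ L S' y) := by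
  classical
  by_contra hcon
  push_neg at hcon
  obtain ⟨T, hT⟩ := bounded_part (S₀ := S₀) hpc L hS'
  apply hx
  refine ⟨S' ∪ T, ?_⟩
  intro z hz
  by_cases hzW : z ∈ L.satSet (S' : Set G)
  · exact L.satSet_mono (by exact_mod_cast Finset.coe_subset.2 Finset.subset_union_left) hzW
  · have hbz : L.bddSet (ccSet S₀ L S' z) := hcon z hzW hz
    have := hT z hzW hbz
    exact L.satSet_mono (by exact_mod_cast Finset.coe_subset.2 Finset.subset_union_right) this


/-! #### Connected components of complements, and filtered ends -/

variable (S₀) in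
/-- The connected component of `x` in the subgraph induced on `Wᶜ`. -/
def cptMk {W : Set G} {x : G} (hx : x ∈ Wᶜ) :
    ((cayleyGraph G S₀).induce Wᶜ).ConnectedComponent :=
  ((cayleyGraph G S₀).induce Wᶜ).connectedComponentMk ⟨x, hx⟩

lemma cptMk_eq_iff {W : Set G} {x y : G} (hx : x ∈ Wᶜ) (hy : y ∈ Wᶜ) :
    cptMk S₀ hx = cptMk S₀ hy ↔ AvoidReach S₀ W x y := by
  rw [cptMk, cptMk, ConnectedComponent.eq]
  exact (avoid_iff_induce_reach hx hy).symm

lemma cptMk_map {W W' : Set G} (hWW' : W'ᶜ ⊆ Wᶜ) {x : G} (hx : x ∈ W'ᶜ) :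
    (cptMk S₀ hx).map ((cayleyGraph G S₀).inclHom hWW') = cptMk S₀ (hWW' hx) := rfl

variable (S₀) in
/-- The vertex set of a connected component of the subgraph induced on `Wᶜ`. -/
def cptSet {W : Set G} (c : ((cayleyGraph G S₀).induce Wᶜ).ConnectedComponent) : Set G :=
  {v | ∃ hv : v ∈ Wᶜ, cptMk S₀ hv = c}

lemma cptSet_nonempty {W : Set G} (c : ((cayleyGraph G S₀).induce Wᶜ).ConnectedComponent) :
    ∃ v, v ∈ cptSet S₀ c := by
  obtain ⟨⟨v, hv⟩, hc⟩ := Quot.exists_rep c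
  exact ⟨v, hv, hc⟩

lemma mem_cptSet_mk {W : Set G} {x v : G} (hx : x ∈ Wᶜ) :
    v ∈ cptSet S₀ (cptMk S₀ hx) ↔ AvoidReach S₀ W x v := by
  constructor
  · rintro ⟨hv, he⟩
    exact ((cptMk_eq_iff hv hx).1 he).symm
  · intro h
    exact ⟨h.notMem_right, (cptMk_eq_iff h.notMem_right hx).2 h.symm⟩

lemma cptSet_subset_compl {W : Set G} (c : ((cayleyGraph G S₀).induce Wᶜ).ConnectedComponent) :
    cptSet S₀ c ⊆ Wᶜ := fun _ hv => hv.choose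

lemma cptSet_closed {W : Set G} {c : ((cayleyGraph G S₀).induce Wᶜ).ConnectedComponent}
    {v w : G} (hv : v ∈ cptSet S₀ c) (hvw : AvoidReach S₀ W v w) : w ∈ cptSet S₀ c := by
  obtain ⟨hv', he⟩ := hv
  exact ⟨hvw.notMem_right, by
    rw [← he]
    exact (cptMk_eq_iff hvw.notMem_right hv').2 hvw.symm⟩

lemma cptSet_avoid {W : Set G} {c : ((cayleyGraph G S₀).induce Wᶜ).ConnectedComponent}
    {v w : G} (hv : v ∈ cptSet S₀ c) (hw : w ∈ cptSet S₀ c) : AvoidReach S₀ W v w := by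
  obtain ⟨hv', hev⟩ := hv
  obtain ⟨hw', hew⟩ := hw
  exact (cptMk_eq_iff hv' hw').1 (hev.trans hew.symm)

lemma cptSet_disjoint {W : Set G} {c c' : ((cayleyGraph G S₀).induce Wᶜ).ConnectedComponent}
    (hne : c ≠ c') {v : G} (hv : v ∈ cptSet S₀ c) (hv' : v ∈ cptSet S₀ c') : False := by
  obtain ⟨h1, he1⟩ := hv
  obtain ⟨h2, he2⟩ := hv'
  exact hne (he1.symm.trans he2)

lemma cptSet_eq_ccSet {W : Set G} {x : G} (hx : x ∈ Wᶜ) :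
    cptSet S₀ (cptMk S₀ hx) = {v | AvoidReach S₀ W x v} := by
  ext v
  exact mem_cptSet_mk hx

/-! #### Filtered ends interface -/

section EndsInterface

variable {L : Subgroup G}

variable (S₀) in
/-- The vertex set of the component of a filtered end at stage `S`. -/
def eSet (f : filteredEnds (cayleyGraph G S₀) L) (S : Finset G) : Set G :=
  cptSet S₀ (f.1 S)

lemma eSet_nonempty (f : filteredEnds (cayleyGraph G S₀) L) (S : Finset G) :
    ∃ v, v ∈ eSet S₀ f S := cptSet_nonempty _

lemma eSet_subset_compl (f : filteredEnds (cayleyGraph G S₀) L) (S : Finset G) :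
    eSet S₀ f S ⊆ (L.satSet (S : Set G))ᶜ := cptSet_subset_compl _

lemma eSet_anti (f : filteredEnds (cayleyGraph G S₀) L) {S S' : Finset G} (h : S ⊆ S') :
    eSet S₀ f S' ⊆ eSet S₀ f S := by
  rintro v ⟨hv, he⟩
  have hsub : (L.satSet (S' : Set G))ᶜ ⊆ (L.satSet (S : Set G))ᶜ :=
    Set.compl_subset_compl.mpr (L.satSet_mono (Finset.coe_subset.mpr h))
  refine ⟨hsub hv, ?_⟩
  have hmap := f.2 h
  rw [← hmap, ← he]
  exact (cptMk_map hsub hv).symm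

lemma eSet_closed (f : filteredEnds (cayleyGraph G S₀) L) (S : Finset G) {v w : G}
    (hv : v ∈ eSet S₀ f S) (hvw : AvoidReach S₀ (L.satSet (S : Set G)) v w) :
    w ∈ eSet S₀ f S := cptSet_closed hv hvw

lemma eSet_avoid (f : filteredEnds (cayleyGraph G S₀) L) (S : Finset G) {v w : G}
    (hv : v ∈ eSet S₀ f S) (hw : w ∈ eSet S₀ f S) :
    AvoidReach S₀ (L.satSet (S : Set G)) v w := cptSet_avoid hv hw

lemma ends_exists_ne {f g : filteredEnds (cayleyGraph G S₀) L} (hne : f ≠ g) :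
    ∃ S, f.1 S ≠ g.1 S := by
  by_contra hcon
  push_neg at hcon
  exact hne (Subtype.ext (funext hcon))

lemma ends_ne_mono {f g : filteredEnds (cayleyGraph G S₀) L} {S S' : Finset G}
    (h : S ⊆ S') (hne : f.1 S ≠ g.1 S) : f.1 S' ≠ g.1 S' := by
  intro he
  apply hne
  rw [← f.2 h, ← g.2 h, he]

lemma eSet_ne_disjoint {f g : filteredEnds (cayleyGraph G S₀) L} {S : Finset G}
    (hne : f.1 S ≠ g.1 S) {v : G} (hv : v ∈ eSet S₀ f S) (hv' : v ∈ eSet S₀ g S) : False :=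
  cptSet_disjoint hne hv hv'

end EndsInterface

/-! #### Construction of a filtered end from an unbounded component -/

lemma exists_end_extending (hpc : (cayleyGraph G S₀).Preconnected)
    {L : Subgroup G} {S : Finset G} (hS : S.Nonempty)
    (enum : ℕ → G) (henum : Function.Surjective enum)
    {x₀ : G} (hx₀ : x₀ ∈ (L.satSet (S : Set G))ᶜ) (hub : ¬ L.bddSet (ccSet S₀ L S x₀)) :
    ∃ E : filteredEnds (cayleyGraph G S₀) L, E.1 S = cptMk S₀ hx₀ := by
  classical
  set seq : ℕ → Finset G := fun n => S ∪ (Finset.range n).image enum with hseqdef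
  have hseq0 : S ⊆ seq 0 := by simp [hseqdef]
  have hseq0' : seq 0 ⊆ S := by simp [hseqdef]
  have hseqmono : ∀ {m n : ℕ}, m ≤ n → seq m ⊆ seq n := by
    intro m n hmn
    apply Finset.union_subset_union subset_rfl
    apply Finset.image_subset_image
    intro k hk
    rw [Finset.mem_range] at hk ⊢
    omega
  have hseqne : ∀ n, (seq n).Nonempty := fun n => hS.mono (hseq0.trans (hseqmono (Nat.zero_le n)))
  have hcof : ∀ T : Finset G, ∃ n, T ⊆ seq n := by
    intro T
    have hch : ∀ t : G, ∃ k, enum k = t := henum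
    refine ⟨(T.sup fun t => Nat.find (hch t)) + 1, ?_⟩
    intro t ht
    rw [hseqdef]
    apply Finset.mem_union_right
    rw [Finset.mem_image]
    refine ⟨Nat.find (hch t), ?_, Nat.find_spec (hch t)⟩
    rw [Finset.mem_range]
    exact Nat.lt_succ_of_le (Finset.le_sup (f := fun t => Nat.find (hch t)) ht)
  -- the chain of points
  have hx₀0 : x₀ ∉ L.satSet ((seq 0 : Finset G) : Set G) := by
    intro hmem
    exact hx₀ (L.satSet_mono (Finset.coe_subset.mpr hseq0') hmem)
  have hub0 : ¬ L.bddSet (ccSet S₀ L (seq 0) x₀) := by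
    intro hb
    apply hub
    refine bdd_of_subset ?_ hb
    intro z hz
    have hz' : AvoidReach S₀ (L.satSet (S : Set G)) x₀ z := hz
    exact hz'.mono (L.satSet_mono (Finset.coe_subset.mpr hseq0'))
  let Next : ∀ n : ℕ,
      {v : G // v ∉ L.satSet ((seq n : Finset G) : Set G) ∧ ¬ L.bddSet (ccSet S₀ L (seq n) v)} →
      {v : G // v ∉ L.satSet ((seq (n+1) : Finset G) : Set G) ∧
        ¬ L.bddSet (ccSet S₀ L (seq (n+1)) v)} := fun n prev =>
    let h := child_lemma (S₀ := S₀) hpc (hseqne (n+1)) (hseqmono (Nat.le_succ n)) prev.2.2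
    ⟨h.choose, h.choose_spec.1, h.choose_spec.2.2⟩
  let F : ∀ n : ℕ,
      {v : G // v ∉ L.satSet ((seq n : Finset G) : Set G) ∧ ¬ L.bddSet (ccSet S₀ L (seq n) v)} :=
    fun n => Nat.rec ⟨x₀, hx₀0, hub0⟩ Next n
  have hFstep : ∀ n, AvoidReach S₀ (L.satSet ((seq n : Finset G) : Set G)) (F n).1 (F (n+1)).1 :=
    fun n =>
      (child_lemma (S₀ := S₀) hpc (hseqne (n+1)) (hseqmono (Nat.le_succ n))
        (F n).2.2).choose_spec.2.1
  have hFchain : ∀ {m n : ℕ}, m ≤ n →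
      AvoidReach S₀ (L.satSet ((seq m : Finset G) : Set G)) (F m).1 (F n).1 := by
    intro m n hmn
    induction n, hmn using Nat.le_induction with
    | base => exact avoid_refl (F m).2.1
    | succ n hmn ih =>
      exact ih.trans ((hFstep n).mono (L.satSet_mono (Finset.coe_subset.mpr (hseqmono hmn))))
  -- index of a finset in the chain
  let idx : Finset G → ℕ := fun T => Nat.find (hcof T)
  have hidx : ∀ T : Finset G, T ⊆ seq (idx T) := fun T => Nat.find_spec (hcof T)
  have hpt : ∀ T : Finset G, (F (idx T)).1 ∈ (L.satSet (T : Set G))ᶜ := by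
    intro T hmem
    exact (F (idx T)).2.1 (L.satSet_mono (Finset.coe_subset.mpr (hidx T)) hmem)
  -- key comparison: reaching between stages
  have hkey : ∀ {T T' : Finset G}, T ⊆ T' →
      AvoidReach S₀ (L.satSet (T : Set G)) (F (idx T)).1 (F (idx T')).1 := by
    intro T T' hTT'
    rcases le_total (idx T) (idx T') with hle | hle
    · exact (hFchain hle).mono (L.satSet_mono (Finset.coe_subset.mpr (hidx T)))
    · have : AvoidReach S₀ (L.satSet ((seq (idx T') : Finset G) : Set G)) (F (idx T')).1
          (F (idx T)).1 := hFchain hle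
      exact (this.mono (L.satSet_mono (Finset.coe_subset.mpr (hTT'.trans (hidx T'))))).symm
  refine ⟨⟨fun T => cptMk S₀ (hpt T), ?_⟩, ?_⟩
  · intro T T' hTT'
    rw [cptMk_map]
    rw [cptMk_eq_iff]
    exact (hkey hTT').symm
  · show cptMk S₀ (hpt S) = cptMk S₀ hx₀
    rw [cptMk_eq_iff]
    have h0 : AvoidReach S₀ (L.satSet ((seq 0 : Finset G) : Set G)) (F 0).1 (F (idx S)).1 :=
      hFchain (Nat.zero_le _)
    have : AvoidReach S₀ (L.satSet (S : Set G)) x₀ (F (idx S)).1 :=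
      h0.mono (L.satSet_mono (Finset.coe_subset.mpr hseq0))
    exact this.symm


/-! #### Unbounded components -/

variable (S₀) in
/-- The type of unbounded components at stage `S`. -/
def UComp (L : Subgroup G) (S : Finset G) :=
  {c : ((cayleyGraph G S₀).induce ((L.satSet (S : Set G))ᶜ)).ConnectedComponent //
    ¬ L.bddSet (cptSet S₀ c)}

lemma ucomp_rep {L : Subgroup G} {S : Finset G} (c : UComp S₀ L S) :
    ∃ (x : G) (hx : x ∈ (L.satSet (S : Set G))ᶜ),
      c.1 = cptMk S₀ hx ∧ ¬ L.bddSet (ccSet S₀ L S x) := by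
  obtain ⟨x, hx⟩ := cptSet_nonempty c.1
  obtain ⟨hv, heq⟩ := hx
  refine ⟨x, hv, heq.symm, ?_⟩
  have h2 := c.2
  rw [← heq, cptSet_eq_ccSet] at h2
  exact h2

variable (S₀) in
/-- Constructor for unbounded components. -/
def mkU {L : Subgroup G} {S : Finset G} {x : G} (hx : x ∈ (L.satSet (S : Set G))ᶜ)
    (hub : ¬ L.bddSet (ccSet S₀ L S x)) : UComp S₀ L S :=
  ⟨cptMk S₀ hx, by rw [cptSet_eq_ccSet]; exact hub⟩

lemma cptSet_subset_map {W W' : Set G} (hsub : W'ᶜ ⊆ Wᶜ)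
    (c : ((cayleyGraph G S₀).induce W'ᶜ).ConnectedComponent) :
    cptSet S₀ c ⊆ cptSet S₀ (c.map ((cayleyGraph G S₀).inclHom hsub)) := by
  rintro v ⟨hv, he⟩
  refine ⟨hsub hv, ?_⟩
  rw [← he]
  exact cptMk_map hsub hv

variable (S₀) in
/-- The parent map on unbounded components. -/
def pmapU {L : Subgroup G} {S S' : Finset G} (h : S ⊆ S') (c : UComp S₀ L S') : UComp S₀ L S :=
  ⟨c.1.map ((cayleyGraph G S₀).inclHom (Set.compl_subset_compl.mpr
      (L.satSet_mono (Finset.coe_subset.mpr h)))), by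
    intro hb
    exact c.2 (bdd_of_subset (cptSet_subset_map _ c.1) hb)⟩

lemma pmapU_surj (hpc : (cayleyGraph G S₀).Preconnected) {L : Subgroup G} {S S' : Finset G}
    (hS' : S'.Nonempty) (h : S ⊆ S') :
    Function.Surjective (pmapU S₀ (L := L) h) := by
  intro c
  obtain ⟨x, hx, hce, hub⟩ := ucomp_rep c
  obtain ⟨y, hy', hxy, hub'⟩ := child_lemma (S₀ := S₀) hpc hS' h hub
  refine ⟨mkU S₀ hy' hub', ?_⟩
  apply Subtype.ext
  show ((mkU S₀ hy' hub').1).map _ = c.1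
  rw [mkU]
  rw [cptMk_map, hce, cptMk_eq_iff]
  exact hxy.symm

variable (S₀) in
/-- There exist `n` pairwise-separated unbounded components at stage `S`. -/
def ManyComps (L : Subgroup G) (S : Finset G) (n : ℕ) : Prop :=
  ∃ x : Fin n → G, (∀ i, x i ∉ L.satSet (S : Set G) ∧ ¬ L.bddSet (ccSet S₀ L S (x i))) ∧
    ∀ i j, i ≠ j → ¬ AvoidReach S₀ (L.satSet (S : Set G)) (x i) (x j)

lemma many_of_emb {L : Subgroup G} {S : Finset G} {n : ℕ} (emb : Fin n ↪ UComp S₀ L S) :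
    ManyComps S₀ L S n := by
  choose x hx hce hub using fun i => ucomp_rep (emb i)
  refine ⟨x, fun i => ⟨hx i, hub i⟩, ?_⟩
  intro i j hne hav
  apply hne
  apply emb.injective
  apply Subtype.ext
  rw [hce i, hce j, cptMk_eq_iff]
  exact hav

lemma finite_ucomp {L : Subgroup G} {S : Finset G} {n : ℕ} (hnm : ¬ ManyComps S₀ L S n) :
    Finite (UComp S₀ L S) := by
  by_contra hfin
  rw [not_finite_iff_infinite] at hfin
  exact hnm (many_of_emb (Fin.valEmbedding.trans (Infinite.natEmbedding _)))

lemma card_ucomp_lt {L : Subgroup G} {S : Finset G} {n : ℕ} (hnm : ¬ ManyComps S₀ L S n)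
    (hn : 0 < n) : Nat.card (UComp S₀ L S) < n := by
  haveI := finite_ucomp hnm
  by_contra hle
  push_neg at hle
  haveI := Fintype.ofFinite (UComp S₀ L S)
  rw [Nat.card_eq_fintype_card] at hle
  exact hnm (many_of_emb ((Fin.castLEEmb hle).trans (Fintype.equivFin _).symm.toEmbedding))

/-! #### Translation of closed sets and the crossing argument -/

lemma smul_closed {W C : Set G} (hC : ∀ v w, v ∈ C → AvoidReach S₀ W v w → w ∈ C) (h : G) :
    ∀ v w, v ∈ h • C → AvoidReach S₀ (h • W) v w → w ∈ h • C := by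
  intro v w hv hvw
  rw [Set.mem_smul_set] at hv
  obtain ⟨v₀, hv₀, rfl⟩ := hv
  have hvw' := hvw.smul h⁻¹
  rw [inv_smul_smul] at hvw'
  have : h⁻¹ * (h • v₀) = v₀ := by
    show h⁻¹ * (h * v₀) = v₀
    rw [inv_mul_cancel_left]
  rw [this] at hvw'
  have hw : h⁻¹ * w ∈ C := hC v₀ (h⁻¹ * w) hv₀ hvw'
  rw [Set.mem_smul_set]
  exact ⟨h⁻¹ * w, hw, by show h * (h⁻¹ * w) = w; rw [mul_inv_cancel_left]⟩

lemma coset_seq {K H : Subgroup G} (hHK : Infinite (H ⧸ K.subgroupOf H)) :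
    ∃ hcs : ℕ → G, (∀ j, hcs j ∈ H) ∧ ∀ i j : ℕ, i ≠ j → (hcs j)⁻¹ * hcs i ∉ K := by
  classical
  let emb := Infinite.natEmbedding (H ⧸ K.subgroupOf H)
  refine ⟨fun j => ((emb j).out : H), fun j => ((emb j).out : H).2, ?_⟩
  intro i j hne hmem
  apply hne
  apply emb.injective
  have : ((emb j).out)⁻¹ * (emb i).out ∈ K.subgroupOf H := by
    rw [Subgroup.mem_subgroupOf]
    push_cast
    exact hmem
  have heq := (QuotientGroup.eq (s := K.subgroupOf H)).2 this
  rw [QuotientGroup.out_eq', QuotientGroup.out_eq'] at heq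
  exact heq.symm

lemma crossing {K : Subgroup G} (hpc : (cayleyGraph G S₀).Preconnected) {Sw : Finset G}
    {C₁ C₂ : Set G}
    (hC₁ : ∀ v w, v ∈ C₁ → AvoidReach S₀ (K.satSet (Sw : Set G)) v w → w ∈ C₁)
    (hdis : ∀ v, v ∈ C₁ → v ∈ C₂ → False)
    (hcs : ℕ → G) (hdist : ∀ i j : ℕ, i ≠ j → (hcs j)⁻¹ * hcs i ∉ K)
    {t₁ t₂ : G} {J : Set ℕ} (hJ : Infinite ↥J)
    (hmem : ∀ j ∈ J, t₁ ∈ hcs j • C₁ ∧ t₂ ∈ hcs j • C₂) : False := by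
  classical
  obtain ⟨p⟩ := hpc t₁ t₂
  have hhit : ∀ j : ↥J, ∃ vks : G × G × G, vks.1 ∈ p.support ∧ vks.2.1 ∈ K ∧
      vks.2.2 ∈ (Sw : Set G) ∧ hcs j.1 * (vks.2.1 * vks.2.2) = vks.1 := by
    rintro ⟨j, hj⟩
    by_contra hcon
    push_neg at hcon
    have havoid : AvoidReach S₀ (hcs j • K.satSet (Sw : Set G)) t₁ t₂ := by
      refine ⟨p, ?_⟩
      intro v hv hvW
      rw [Set.mem_smul_set] at hvW
      obtain ⟨w, hw, hws⟩ := hvW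
      obtain ⟨k, hk, s, hs, hks⟩ := hw
      have := hcon (v, k, s) hv hk hs
      apply this
      show hcs j * (k * s) = v
      rw [← hws]
      show hcs j * (k * s) = hcs j * w
      rw [← hks]
      rfl
    have h1 := (hmem j hj).1
    have h2 := (hmem j hj).2
    have ht₂ : t₂ ∈ hcs j • C₁ := smul_closed hC₁ (hcs j) t₁ t₂ h1 havoid
    rw [Set.mem_smul_set] at ht₂ h2
    obtain ⟨u₁, hu₁, heu₁⟩ := ht₂
    obtain ⟨u₂, hu₂, heu₂⟩ := h2
    have : u₁ = u₂ := by
      have : (hcs j)⁻¹ * (hcs j • u₁) = (hcs j)⁻¹ * (hcs j • u₂) := by rw [heu₁, heu₂]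
      simpa [smul_eq_mul, inv_mul_cancel_left] using this
    exact hdis u₁ hu₁ (this ▸ hu₂)
  choose dat hd1 hd2 hd3 hd4 using hhit
  let Ψ : ↥J → {v // v ∈ p.support.toFinset} × {s // s ∈ Sw} := fun j =>
    (⟨(dat j).1, List.mem_toFinset.2 (hd1 j)⟩, ⟨(dat j).2.2, by exact_mod_cast hd3 j⟩)
  obtain ⟨j, j', hne, heq⟩ := Finite.exists_ne_map_eq_of_infinite Ψ
  have hveq : (dat j).1 = (dat j').1 := congrArg (fun z => (z.1 : G)) heq
  have hseq : (dat j).2.2 = (dat j').2.2 := congrArg (fun z => (z.2 : G)) heq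
  set a := hcs j.1
  set b := hcs j'.1
  set k := (dat j).2.1
  set k' := (dat j').2.1
  set s := (dat j).2.2
  have h4 : a * k = b * k' := by
    have e1 : a * (k * s) = (dat j).1 := hd4 j
    have e2 : b * (k' * (dat j').2.2) = (dat j').1 := hd4 j'
    have e3 : a * k * s = b * k' * s := by
      rw [mul_assoc, mul_assoc, e1, hveq, ← e2, hseq]
    exact mul_right_cancel e3
  have h5 : b⁻¹ * a = k' * k⁻¹ := by
    calc b⁻¹ * a = b⁻¹ * ((a * k) * k⁻¹) := by group
    _ = b⁻¹ * ((b * k') * k⁻¹) := by rw [h4]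
    _ = k' * k⁻¹ := by group
  have hjne : (j : ℕ) ≠ (j' : ℕ) := fun hc => hne (Subtype.ext hc)
  exact hdist j j' hjne (h5 ▸ K.mul_mem (hd2 j') (K.inv_mem (hd2 j)))


/-! #### The main counting lemma -/

lemma many_comps (hpc : (cayleyGraph G S₀).Preconnected)
    (enum : ℕ → G) (henum : Function.Surjective enum)
    {K H : Subgroup G} (hKH : K ≤ H)
    (hGH : Infinite (G ⧸ H)) (hHK : Infinite (H ⧸ K.subgroupOf H))
    (f g : filteredEnds (cayleyGraph G S₀) K) (hfg : f ≠ g) :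
    ∀ n : ℕ, ∃ S : Finset G, S.Nonempty ∧ ManyComps S₀ H S n := by
  classical
  by_contra hcon
  push_neg at hcon
  obtain ⟨n₀, hn₀⟩ := hcon
  have hmany0 : ∀ S : Finset G, ManyComps S₀ H S 0 :=
    fun S => ⟨Fin.elim0, fun i => i.elim0, fun i => i.elim0⟩
  have hn₀pos : 0 < n₀ := by
    rcases Nat.eq_zero_or_pos n₀ with h0 | h
    · exact absurd (h0 ▸ hmany0 {1}) (hn₀ {1} ⟨1, Finset.mem_singleton_self 1⟩)
    · exact h
  -- the chain of finite sets
  set seq : ℕ → Finset G := fun n => {(1 : G)} ∪ (Finset.range n).image enum with hseqdef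
  have hseqmono : ∀ {m n : ℕ}, m ≤ n → seq m ⊆ seq n := by
    intro m n hmn
    apply Finset.union_subset_union subset_rfl
    apply Finset.image_subset_image
    intro k hk
    rw [Finset.mem_range] at hk ⊢
    omega
  have hseqne : ∀ n, (seq n).Nonempty := fun n => ⟨1, by simp [hseqdef]⟩
  have hcof : ∀ T : Finset G, ∃ n, T ⊆ seq n := by
    intro T
    have hch : ∀ t : G, ∃ k, enum k = t := henum
    refine ⟨(T.sup fun t => Nat.find (hch t)) + 1, ?_⟩
    intro t ht
    rw [hseqdef]
    apply Finset.mem_union_right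
    rw [Finset.mem_image]
    refine ⟨Nat.find (hch t), ?_, Nat.find_spec (hch t)⟩
    rw [Finset.mem_range]
    exact Nat.lt_succ_of_le (Finset.le_sup (f := fun t => Nat.find (hch t)) ht)
  -- finiteness and stabilization of the number of unbounded components
  have hfin : ∀ j : ℕ, Finite (UComp S₀ H (seq j)) :=
    fun j => finite_ucomp (hn₀ (seq j) (hseqne j))
  have hcard : ∀ j, Nat.card (UComp S₀ H (seq j)) < n₀ :=
    fun j => card_ucomp_lt (hn₀ _ (hseqne j)) hn₀pos
  let pj : ∀ j : ℕ, UComp S₀ H (seq (j+1)) → UComp S₀ H (seq j) :=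
    fun j => pmapU S₀ (hseqmono (Nat.le_succ j))
  have hpjsurj : ∀ j, Function.Surjective (pj j) :=
    fun j => pmapU_surj hpc (hseqne _) _
  let Nc : ℕ → ℕ := fun j => Nat.card (UComp S₀ H (seq j))
  have hmonoN : ∀ j, Nc j ≤ Nc (j+1) := by
    intro j
    haveI := hfin (j+1)
    exact Nat.card_le_card_of_surjective _ (hpjsurj j)
  have hmonoN' : ∀ {a b : ℕ}, a ≤ b → Nc a ≤ Nc b := by
    intro a b hab
    induction b, hab using Nat.le_induction with
    | base => exact le_refl _
    | succ n hn ih => exact ih.trans (hmonoN n)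
  have hex : ∃ j₀, ∀ j, j₀ ≤ j → Nc j = Nc j₀ := by
    have hval : ∀ j, Nc j ≤ Nat.findGreatest (fun k => ∃ j, Nc j = k) n₀ :=
      fun j => Nat.le_findGreatest (le_of_lt (hcard j)) ⟨j, rfl⟩
    have hspec : ∃ j, Nc j = Nat.findGreatest (fun k => ∃ j, Nc j = k) n₀ :=
      Nat.findGreatest_spec (P := fun k => ∃ j, Nc j = k) (m := Nc 0) (le_of_lt (hcard 0)) ⟨0, rfl⟩
    obtain ⟨j₀, hj₀⟩ := hspec
    refine ⟨j₀, fun j hj => le_antisymm (hj₀ ▸ hval j) (hmonoN' hj)⟩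
  obtain ⟨j₀, hstab⟩ := hex
  have hbij : ∀ j : ℕ, Function.Bijective (pj (j₀ + j)) := by
    intro j
    haveI := hfin (j₀ + j)
    haveI := hfin (j₀ + j + 1)
    haveI := Fintype.ofFinite (UComp S₀ H (seq (j₀ + j)))
    haveI := Fintype.ofFinite (UComp S₀ H (seq (j₀ + j + 1)))
    rw [Fintype.bijective_iff_surjective_and_card]
    refine ⟨hpjsurj _, ?_⟩
    have e1 : Nc (j₀ + j + 1) = Nc j₀ := hstab _ (by omega)
    have e2 : Nc (j₀ + j) = Nc j₀ := hstab _ (by omega)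
    rw [← Nat.card_eq_fintype_card, ← Nat.card_eq_fintype_card]
    exact e1.trans e2.symm
  let eqv : ∀ j : ℕ, UComp S₀ H (seq (j₀ + j + 1)) ≃ UComp S₀ H (seq (j₀ + j)) :=
    fun j => Equiv.ofBijective _ (hbij j)
  let Fch : UComp S₀ H (seq j₀) → ∀ j : ℕ, UComp S₀ H (seq (j₀ + j)) := fun i j =>
    Nat.rec (motive := fun j => UComp S₀ H (seq (j₀ + j))) i (fun j prev => (eqv j).symm prev) j
  have hFchcover : ∀ j (c : UComp S₀ H (seq (j₀ + j))), ∃ i, Fch i j = c := by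
    intro j
    induction j with
    | zero => exact fun c => ⟨c, rfl⟩
    | succ j ih =>
      intro c
      obtain ⟨i, hi⟩ := ih ((eqv j) c)
      refine ⟨i, ?_⟩
      show (eqv j).symm (Fch i j) = c
      rw [hi]
      exact (eqv j).symm_apply_apply c
  have hnest1 : ∀ i j, cptSet S₀ (Fch i (j+1)).1 ⊆ cptSet S₀ (Fch i j).1 := by
    intro i j v hv
    have h1 : v ∈ cptSet S₀ ((pmapU S₀ (L := H) (hseqmono (Nat.le_succ (j₀+j))) (Fch i (j+1))).1) :=
      cptSet_subset_map _ (Fch i (j+1)).1 hv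
    have h2 : pmapU S₀ (hseqmono (Nat.le_succ (j₀+j))) (Fch i (j+1)) = Fch i j := by
      show (eqv j) ((eqv j).symm (Fch i j)) = Fch i j
      exact (eqv j).apply_symm_apply _
    rwa [h2] at h1
  have hnest : ∀ (i) {j j' : ℕ}, j ≤ j' → cptSet S₀ (Fch i j').1 ⊆ cptSet S₀ (Fch i j).1 := by
    intro i j j' hjj'
    induction j', hjj' using Nat.le_induction with
    | base => exact subset_rfl
    | succ n hn ih => exact (hnest1 i n).trans ih
  let xs : UComp S₀ H (seq j₀) → ℕ → G := fun i j => (cptSet_nonempty (Fch i j).1).choose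
  have hxs : ∀ i j, xs i j ∈ cptSet S₀ (Fch i j).1 := fun i j => (cptSet_nonempty _).choose_spec
  have hxsnot : ∀ i j, xs i j ∉ H.satSet ((seq (j₀+j)) : Set G) :=
    fun i j => cptSet_subset_compl _ (hxs i j)
  -- the bounded part
  let TbF : ℕ → Finset G := fun j => (bounded_part (S₀ := S₀) hpc H (hseqne (j₀+j))).choose
  have hTbF : ∀ j x, x ∉ H.satSet ((seq (j₀+j) : Finset G) : Set G) →
      H.bddSet (ccSet S₀ H (seq (j₀+j)) x) → x ∈ H.satSet ((TbF j : Finset G) : Set G) :=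
    fun j => (bounded_part (S₀ := S₀) hpc H (hseqne (j₀+j))).choose_spec
  let Tb : ℕ → Finset G := fun j => (Finset.range (j+1)).biUnion (fun l => TbF l ∪ seq (j₀+l))
  have hTbmono : ∀ {j j' : ℕ}, j ≤ j' → Tb j ⊆ Tb j' := by
    intro j j' hjj' v hv
    rw [Finset.mem_biUnion] at hv ⊢
    obtain ⟨l, hl, hvl⟩ := hv
    rw [Finset.mem_range] at hl
    exact ⟨l, Finset.mem_range.2 (by omega), hvl⟩
  have hseqTb : ∀ j, seq (j₀+j) ⊆ Tb j := by
    intro j v hv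
    rw [Finset.mem_biUnion]
    exact ⟨j, Finset.mem_range.2 (by omega), Finset.mem_union_right _ hv⟩
  have hTbFsub : ∀ j, TbF j ⊆ Tb j := by
    intro j v hv
    rw [Finset.mem_biUnion]
    exact ⟨j, Finset.mem_range.2 (by omega), Finset.mem_union_left _ hv⟩
  have hTbcover : ∀ j v, v ∈ H.satSet (↑(Tb j) : Set G) ∨
      ∃ i, v ∈ cptSet S₀ (Fch i j).1 := by
    intro j v
    by_cases hv : v ∈ H.satSet ((seq (j₀+j) : Finset G) : Set G)
    · exact Or.inl (H.satSet_mono (Finset.coe_subset.mpr (hseqTb j)) hv)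
    · by_cases hb : H.bddSet (ccSet S₀ H (seq (j₀+j)) v)
      · exact Or.inl (H.satSet_mono (Finset.coe_subset.mpr (hTbFsub j)) (hTbF j v hv hb))
      · obtain ⟨i, hi⟩ := hFchcover j (mkU S₀ hv hb)
        exact Or.inr ⟨i, by rw [hi]; exact ⟨hv, rfl⟩⟩
  -- capture lemma
  have hcapture : ∀ (j₂ : ℕ) (A : Set G) (h : G), h ∈ H →
      (∀ v w, v ∈ A → AvoidReach S₀ (h • (K.satSet ((seq (j₀+j₂) : Finset G) : Set G))) v w → w ∈ A) →
      (∃ z, z ∈ A ∧ z ∉ H.satSet (↑(Tb (j₂+1)) : Set G)) →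
      ∃ i, cptSet S₀ (Fch i (j₂+1)).1 ⊆ A := by
    intro j₂ A h hh hclosed hz
    obtain ⟨z, hzA, hzT⟩ := hz
    rcases hTbcover (j₂+1) z with hzc | ⟨i, hzi⟩
    · exact absurd hzc hzT
    · refine ⟨i, fun w hw => ?_⟩
      have hreach : AvoidReach S₀ (H.satSet ((seq (j₀+(j₂+1)) : Finset G) : Set G)) z w :=
        cptSet_avoid hzi hw
      refine hclosed z w hzA (hreach.mono ?_)
      intro v hv
      have h1 := smul_satSet_subset hKH hh ((seq (j₀+j₂) : Finset G) : Set G) hv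
      exact H.satSet_mono (Finset.coe_subset.mpr (hseqmono (by omega))) h1
  -- side capture for ends
  have hendside : ∀ (j₂ : ℕ) (e : filteredEnds (cayleyGraph G S₀) K) (h : G), h ∈ H →
      (∃ z, z ∈ eSet S₀ e (seq (j₀+(j₂+1))) ∧ z ∉ H.satSet (↑(Tb (j₂+1)) : Set G)) →
      ∃ i, cptSet S₀ (Fch i (j₂+1)).1 ⊆ h • eSet S₀ e (seq (j₀+j₂)) := by
    intro j₂ e h hh hz
    obtain ⟨z, hz1, hz2⟩ := hz
    apply hcapture j₂ _ h hh
    · exact smul_closed (fun v w hv hvw => eSet_closed e _ hv hvw) h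
    · refine ⟨h * z, ?_, ?_⟩
      · rw [Set.mem_smul_set]
        exact ⟨z, eSet_anti e (hseqmono (by omega)) hz1, rfl⟩
      · intro hmem
        exact hz2 ((smul_mem_satSet_iff hh).1 hmem)
  -- Case B : some end is eventually swallowed by the `H`-bounded part
  have caseB : ∀ (e : filteredEnds (cayleyGraph G S₀) K) (jS : ℕ),
      eSet S₀ e (seq (j₀+jS)) ⊆ H.satSet (↑(Tb jS) : Set G) → False := by
    intro e jS hjS
    obtain ⟨x₁, hx₁W, hx₁ub⟩ := exists_unbounded hpc hGH (hseqne j₀)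
    set iQ : UComp S₀ H (seq j₀) := mkU S₀ hx₁W hx₁ub with hiQdef
    obtain ⟨nT, hnT⟩ := hcof (Tb jS)
    set j₂ := nT + jS with hj₂def
    have hj₂a : Tb jS ⊆ seq (j₀+j₂) := hnT.trans (hseqmono (by omega))
    set Ce := eSet S₀ e (seq (j₀+j₂)) with hCedef
    have hCeΩ : Ce ⊆ H.satSet (↑(Tb jS) : Set G) :=
      (eSet_anti e (hseqmono (by omega))).trans hjS
    set xq := xs iQ j₂ with hxqdef
    set Cq : Set G := {y | AvoidReach S₀ (K.satSet ((seq (j₀+j₂) : Finset G) : Set G)) xq y}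
      with hCqdef
    have hdisCeCq : ∀ v, v ∈ Ce → v ∈ Cq → False := by
      intro v hv1 hv2
      have h1 : xq ∈ Ce := eSet_closed e _ hv1 (AvoidReach.symm hv2)
      have h2 : xq ∈ H.satSet (↑(Tb jS) : Set G) := hCeΩ h1
      exact hxsnot iQ j₂ (H.satSet_mono (Finset.coe_subset.mpr hj₂a) h2)
    have hgood : ∃ t ∈ Tb jS, ∀ E : Finset G, ∃ x, x ∈ Ce ∧
        x ∈ H.satSet ({t} : Set G) ∧ x ∉ K.satSet ((E : Finset G) : Set G) := by
      by_contra hcg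
      push_neg at hcg
      have hch2 : ∀ t : G, ∃ E : Finset G, t ∈ Tb jS → ∀ x, x ∈ Ce →
          x ∈ H.satSet ({t} : Set G) → x ∈ K.satSet ((E : Finset G) : Set G) := by
        intro t
        by_cases ht : t ∈ Tb jS
        · obtain ⟨E, hE⟩ := hcg t ht
          exact ⟨E, fun _ => hE⟩
        · exact ⟨∅, fun hc => absurd hc ht⟩
      choose Efun hEfun using hch2
      obtain ⟨nE, hnE⟩ := hcof ((Tb jS).biUnion Efun)
      set N := nE + j₂ with hNdef
      obtain ⟨x₀, hx₀⟩ := eSet_nonempty e (seq (j₀+N))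
      have hx₀Ce : x₀ ∈ Ce := eSet_anti e (hseqmono (by omega)) hx₀
      have hx₀Ω : x₀ ∈ H.satSet (↑(Tb jS) : Set G) := hCeΩ hx₀Ce
      obtain ⟨h₀, hh₀, t₀, ht₀, he₀⟩ := hx₀Ω
      have ht₀' : t₀ ∈ Tb jS := by exact_mod_cast ht₀
      have hx₀t : x₀ ∈ H.satSet ({t₀} : Set G) := ⟨h₀, hh₀, t₀, Set.mem_singleton t₀, he₀⟩
      have hxE := hEfun t₀ ht₀' x₀ hx₀Ce hx₀t
      have hsub : ((Efun t₀ : Finset G) : Set G) ⊆ ((seq (j₀+N) : Finset G) : Set G) := by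
        intro u hu
        have h1 : u ∈ (Tb jS).biUnion Efun :=
          Finset.mem_biUnion.2 ⟨t₀, ht₀', by exact_mod_cast hu⟩
        have h2 := hnE h1
        exact_mod_cast hseqmono (by omega) h2
      exact (eSet_subset_compl e (seq (j₀+N)) hx₀) (K.satSet_mono hsub hxE)
    obtain ⟨tstar, htstarΩ, htstar⟩ := hgood
    -- a sequence of points of `Ce` in the same right `H`-coset, in distinct `K`-orbits
    let acc : ℕ → Finset G × G := fun n => Nat.rec
      ({(htstar ∅).choose}, (htstar ∅).choose)
      (fun _ prev => (insert (htstar prev.1).choose prev.1, (htstar prev.1).choose)) n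
    let xc : ℕ → G := fun n => (acc n).2
    have hxcmem : ∀ n, xc n ∈ Ce ∧ xc n ∈ H.satSet ({tstar} : Set G) := by
      intro n
      cases n with
      | zero => exact ⟨(htstar ∅).choose_spec.1, (htstar ∅).choose_spec.2.1⟩
      | succ n => exact ⟨(htstar (acc n).1).choose_spec.1, (htstar (acc n).1).choose_spec.2.1⟩
    have hxcin : ∀ n, xc n ∈ (acc n).1 := by
      intro n
      cases n with
      | zero => exact Finset.mem_singleton_self _
      | succ n => exact Finset.mem_insert_self _ _
    have haccmono : ∀ {m n : ℕ}, m ≤ n → (acc m).1 ⊆ (acc n).1 := by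
      intro m n hmn
      induction n, hmn using Nat.le_induction with
      | base => exact subset_rfl
      | succ n hn ih => exact ih.trans (Finset.subset_insert _ _)
    have hxcavoid : ∀ n, xc (n+1) ∉ K.satSet (((acc n).1 : Finset G) : Set G) :=
      fun n => (htstar (acc n).1).choose_spec.2.2
    have hxcnotK : ∀ {m n : ℕ}, m < n → xc n ∉ K.satSet ({xc m} : Set G) := by
      intro m n hmn hKmem
      obtain ⟨n', rfl⟩ : ∃ n', n = n'+1 := ⟨n-1, by omega⟩
      apply hxcavoid n'
      refine K.satSet_mono ?_ hKmem
      intro u hu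
      rw [Set.mem_singleton_iff] at hu
      subst hu
      exact_mod_cast haccmono (by omega : m ≤ n') (hxcin m)
    have hxcform : ∀ n, ∃ η, η ∈ H ∧ η * tstar = xc n := by
      intro n
      obtain ⟨η, hη, t, ht, he⟩ := (hxcmem n).2
      rw [Set.mem_singleton_iff] at ht
      subst ht
      exact ⟨η, hη, he⟩
    choose eta hetaH hetaE using hxcform
    set hcs : ℕ → G := fun n => (eta n)⁻¹ with hcsdef
    have hcsH : ∀ n, hcs n ∈ H := fun n => H.inv_mem (hetaH n)
    have hcsdist : ∀ i j : ℕ, i ≠ j → (hcs j)⁻¹ * hcs i ∉ K := by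
      intro i j hne hKmem
      have he : (hcs j)⁻¹ * hcs i = xc j * (xc i)⁻¹ := by
        rw [hcsdef]
        simp only [inv_inv]
        rw [← hetaE i, ← hetaE j]
        group
      rw [he] at hKmem
      rcases lt_or_gt_of_ne hne with hlt | hlt
      · exact hxcnotK hlt ⟨xc j * (xc i)⁻¹, hKmem, xc i, Set.mem_singleton _, by
          show xc j * (xc i)⁻¹ * xc i = xc j
          group⟩
      · exact hxcnotK hlt ⟨(xc j * (xc i)⁻¹)⁻¹, K.inv_mem hKmem, xc j, Set.mem_singleton _, by
          show (xc j * (xc i)⁻¹)⁻¹ * xc j = xc i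
          group⟩
    have htanchor : ∀ n, tstar ∈ hcs n • Ce := by
      intro n
      rw [Set.mem_smul_set]
      refine ⟨xc n, (hxcmem n).1, ?_⟩
      show (eta n)⁻¹ * xc n = tstar
      rw [← hetaE n]
      group
    -- capture of the q-side
    have hq : ∀ n : ℕ, ∃ i, cptSet S₀ (Fch i (j₂+1)).1 ⊆ hcs n • Cq := by
      intro n
      apply hcapture j₂ _ (hcs n) (hcsH n)
      · exact smul_closed (fun v w hv hvw => AvoidReach.trans hv hvw) (hcs n)
      · obtain ⟨nB, hnB⟩ := hcof (Tb (j₂+1))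
        set Nb := nB + j₂ with hNbdef
        have hsub2 : (Tb (j₂+1) : Finset G) ⊆ seq (j₀+Nb) := hnB.trans (hseqmono (by omega))
        have hz1 : xs iQ Nb ∈ Cq := by
          have hmem2 : xs iQ Nb ∈ cptSet S₀ (Fch iQ j₂).1 := hnest iQ (by omega) (hxs iQ Nb)
          have hr : AvoidReach S₀ (H.satSet ((seq (j₀+j₂) : Finset G) : Set G)) xq (xs iQ Nb) :=
            cptSet_avoid (hxs iQ j₂) hmem2
          exact hr.mono (satSet_le hKH _)
        refine ⟨hcs n * xs iQ Nb, ?_, ?_⟩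
        · rw [Set.mem_smul_set]
          exact ⟨_, hz1, rfl⟩
        · intro hmem
          have h3 := (smul_mem_satSet_iff (hcsH n)).1 hmem
          exact hxsnot iQ Nb (H.satSet_mono (Finset.coe_subset.mpr hsub2) h3)
    choose iq hiq using hq
    haveI := hfin j₀
    obtain ⟨y, hy⟩ := Finite.exists_infinite_fiber iq
    refine crossing (K := K) hpc (Sw := seq (j₀+j₂)) (C₁ := Ce) (C₂ := Cq)
      (fun v w hv hvw => eSet_closed e _ hv hvw) hdisCeCq hcs hcsdist
      (t₁ := tstar) (t₂ := xs y (j₂+1)) (J := iq ⁻¹' {y}) hy ?_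
    intro j hj
    have hj' : iq j = y := by simpa using hj
    refine ⟨htanchor j, ?_⟩
    apply hiq j
    rw [hj']
    exact hxs y (j₂+1)
  -- dispatch the cases
  by_cases hfs : ∃ j, eSet S₀ f (seq (j₀+j)) ⊆ H.satSet (↑(Tb j) : Set G)
  · obtain ⟨jS, hjS⟩ := hfs
    exact caseB f jS hjS
  by_cases hgs : ∃ j, eSet S₀ g (seq (j₀+j)) ⊆ H.satSet (↑(Tb j) : Set G)
  · obtain ⟨jS, hjS⟩ := hgs
    exact caseB g jS hjS
  push_neg at hfs hgs
  -- Case A : both ends are "non-small"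
  obtain ⟨hcs, hcsH, hcsdist⟩ := coset_seq (K := K) (H := H) hHK
  obtain ⟨Sstar, hSstar⟩ := ends_exists_ne hfg
  obtain ⟨nS, hnS⟩ := hcof Sstar
  set j₂ := nS with hj₂def
  have hdiff : f.1 (seq (j₀+j₂)) ≠ g.1 (seq (j₀+j₂)) :=
    ends_ne_mono (hnS.trans (hseqmono (by omega))) hSstar
  have hwitf : ∃ z, z ∈ eSet S₀ f (seq (j₀+(j₂+1))) ∧ z ∉ H.satSet (↑(Tb (j₂+1)) : Set G) := by
    have h1 := hfs (j₂+1)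
    rw [Set.not_subset] at h1
    obtain ⟨z, hz1, hz2⟩ := h1
    exact ⟨z, hz1, hz2⟩
  have hwitg : ∃ z, z ∈ eSet S₀ g (seq (j₀+(j₂+1))) ∧ z ∉ H.satSet (↑(Tb (j₂+1)) : Set G) := by
    have h1 := hgs (j₂+1)
    rw [Set.not_subset] at h1
    obtain ⟨z, hz1, hz2⟩ := h1
    exact ⟨z, hz1, hz2⟩
  have hcapf : ∀ j : ℕ, ∃ i, cptSet S₀ (Fch i (j₂+1)).1 ⊆ hcs j • eSet S₀ f (seq (j₀+j₂)) :=
    fun j => hendside j₂ f (hcs j) (hcsH j) hwitf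
  have hcapg : ∀ j : ℕ, ∃ i, cptSet S₀ (Fch i (j₂+1)).1 ⊆ hcs j • eSet S₀ g (seq (j₀+j₂)) :=
    fun j => hendside j₂ g (hcs j) (hcsH j) hwitg
  choose i₁ hi₁ using hcapf
  choose i₂ hi₂ using hcapg
  haveI := hfin j₀
  obtain ⟨y, hy⟩ := Finite.exists_infinite_fiber (fun j => (i₁ j, i₂ j))
  refine crossing (K := K) hpc (Sw := seq (j₀+j₂))
    (C₁ := eSet S₀ f (seq (j₀+j₂))) (C₂ := eSet S₀ g (seq (j₀+j₂)))
    (fun v w hv hvw => eSet_closed f _ hv hvw)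
    (fun v h1 h2 => eSet_ne_disjoint hdiff h1 h2)
    hcs hcsdist (t₁ := xs y.1 (j₂+1)) (t₂ := xs y.2 (j₂+1))
    (J := (fun j => (i₁ j, i₂ j)) ⁻¹' {y}) hy ?_
  intro j hj
  have hj' : (i₁ j, i₂ j) = y := by simpa using hj
  have hj1 : i₁ j = y.1 := congrArg Prod.fst hj'
  have hj2 : i₂ j = y.2 := congrArg Prod.snd hj'
  constructor
  · apply hi₁ j
    rw [hj1]
    exact hxs y.1 (j₂+1)
  · apply hi₂ j
    rw [hj2]
    exact hxs y.2 (j₂+1)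

end FEAux

end FEAux






/-- For a finitely generated group `G` and subgroups `K ≤ H ≤ G` with `[G:H]` and `[H:K]`
both infinite, if `e(G,K) ≥ 2` then `e(G,H)` is infinite. -/
theorem stmt3 {G : Type} [Group G] (S₀ : Finset G)
    (hgen : Subgroup.closure (S₀ : Set G) = ⊤)
    (K H : Subgroup G) (hKH : K ≤ H)
    (hGH : Infinite (G ⧸ H))
    (hHK : Infinite (H ⧸ K.subgroupOf H))
    (hK : 2 ≤ Cardinal.mk (filteredEnds (cayleyGraph G S₀) K)) :
    Cardinal.aleph0 ≤ Cardinal.mk (filteredEnds (cayleyGraph G S₀) H) := by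
  classical
  haveI hcnt : Countable G := FEAux.countable_of_gen S₀ hgen
  have hpc : (cayleyGraph G S₀).Preconnected := FEAux.cayley_preconnected S₀ hgen
  obtain ⟨enum, henum⟩ := exists_surjective_nat G
  rw [Cardinal.two_le_iff] at hK
  obtain ⟨f, g, hfg⟩ := hK
  rw [← Cardinal.infinite_iff]
  by_contra hfin
  rw [not_infinite_iff_finite] at hfin
  haveI := hfin
  haveI := Fintype.ofFinite (filteredEnds (cayleyGraph G S₀) H)
  set n := Fintype.card (filteredEnds (cayleyGraph G S₀) H) + 1 with hndef
  obtain ⟨S, hSne, x, hx, hxp⟩ :=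
    FEAux.many_comps hpc enum henum hKH hGH hHK f g hfg n
  have hEnds : ∀ i : Fin n, ∃ E : filteredEnds (cayleyGraph G S₀) H,
      E.1 S = FEAux.cptMk S₀ ((hx i).1 : x i ∈ (H.satSet (S : Set G))ᶜ) := by
    intro i
    exact FEAux.exists_end_extending hpc hSne enum henum _ ((hx i).2)
  choose E hE using hEnds
  have hinj : Function.Injective E := by
    intro i j hij
    by_contra hne
    apply hxp i j hne
    have h1 := hE i
    rw [hij, hE j] at h1
    exact ((FEAux.cptMk_eq_iff _ _).1 h1).symm
  have hcard := Fintype.card_le_of_injective E hinj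
  rw [Fintype.card_fin] at hcard
  omega
end

section
/- Let H be a group acting freely on a set Y, let C ⊆ Y be a finite subset, and let K ≤ H be a subgroup. Then there exists a finite subset T ⊆ H such that every h ∈ H with (h•C) ∩ (K•C) ≠ ∅ lies in Kt for some t ∈ T; that is, the set {h ∈ H : (h•C) ∩ (K•C) ≠ ∅} is contained in a union of finitely many right cosets of K in H. -/
open SimpleGraph

/-- If `H` acts freely on `Y`, `C ⊆ Y` is finite, and `K ≤ H`, then the set of `h ∈ H`
with `(h•C) ∩ (K•C) ≠ ∅` is contained in finitely many right cosets of `K`. -/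
theorem stmt4 {H Y : Type} [Group H] [MulAction H Y]
    (hfree : ∀ (g : H) (y : Y), g • y = y → g = 1)
    (C : Set Y) (hC : C.Finite) (K : Subgroup H) :
    ∃ T : Finset H, ∀ h : H,
      (((fun c => h • c) '' C) ∩ K.satSet C).Nonempty →
        ∃ t ∈ T, ∃ k ∈ K, h = k * t := by
  have hS : {g : H | ∃ c ∈ C, g • c ∈ C}.Finite := by
    have hsub : {g : H | ∃ c ∈ C, g • c ∈ C} ⊆ ⋃ c ∈ C, ⋃ c' ∈ C, {g : H | g • c = c'} := by
      rintro g ⟨c, hc, hgc⟩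
      exact Set.mem_biUnion hc (Set.mem_biUnion hgc rfl)
    refine Set.Finite.subset (Set.Finite.biUnion hC fun c _ => Set.Finite.biUnion hC
      fun c' _ => Set.Subsingleton.finite ?_) hsub
    intro g hg g' hg'
    have : (g'⁻¹ * g) • c = c := by
      simp only [Set.mem_setOf_eq] at hg hg'
      rw [mul_smul, hg, ← hg', inv_smul_smul]
    exact (inv_mul_eq_one.mp (hfree _ _ this)).symm
  refine ⟨hS.toFinset, fun h ⟨y, ⟨c, hc, hy⟩, k, hk, c', hc', hy'⟩ => ?_⟩
  refine ⟨k⁻¹ * h, ?_, k, hk, by group⟩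
  simp only [Set.Finite.mem_toFinset, Set.mem_setOf_eq]
  exact ⟨c, hc, by simp only at hy; rw [mul_smul, hy, ← hy', inv_smul_smul]; exact hc'⟩
end

section
/- Let Y be a locally finite simple graph with vertex set V, let H be a group acting freely on V by automorphisms of Y, let K ≤ H be a subgroup, and let C ⊆ V be finite. Set B = ⋃ { h•C : h ∈ H, (h•C) ∩ (K•C) ≠ ∅ }. Then there exists a finite subset F ⊆ V such that B together with all vertices of Y adjacent to a vertex of B is contained in K•F. -/
open SimpleGraph

/-- Let `B` be the union of the translates `h•C` meeting `K•C`. Then `B` together with all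
vertices adjacent to `B` is contained in `K•F` for some finite `F`. -/
theorem stmt8 {V H : Type} [Group H] [MulAction H V] (Y : SimpleGraph V)
    (hlf : ∀ v : V, (Y.neighborSet v).Finite)
    (hfree : ∀ (g : H) (v : V), g • v = v → g = 1)
    (haut : ∀ (g : H) (u v : V), Y.Adj (g • u) (g • v) ↔ Y.Adj u v)
    (K : Subgroup H) (C : Set V) (hC : C.Finite)
    (B : Set V)
    (hB : B = ⋃ h ∈ {h : H | (((fun c => h • c) '' C) ∩ K.satSet C).Nonempty},
      (fun c => h • c) '' C) :
    ∃ F : Finset V, B ∪ Y.nbhd B ⊆ K.satSet (F : Set V) := by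

  classical
  set G₀ : Set H := ⋃ c ∈ C, ⋃ c' ∈ C, {g : H | g • c = c'} with hG₀def
  have hG₀fin : G₀.Finite := by
    apply Set.Finite.biUnion hC
    intro c _
    apply Set.Finite.biUnion hC
    intro c' _
    apply Set.Subsingleton.finite
    intro g hg g' hg'
    have h1 : (g'⁻¹ * g) • c = c := by
      rw [mul_smul, hg, ← hg', inv_smul_smul]
    have h2 := hfree _ _ h1
    have := inv_mul_eq_one.mp h2
    exact this.symm
  have hN : (Y.nbhd C).Finite := by
    apply Set.Finite.subset (Set.Finite.biUnion hC (fun c _ => hlf c))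
    rintro v ⟨w, hw, hadj⟩
    exact Set.mem_biUnion hw hadj.symm
  set F' : Set V := (fun p : H × V => p.1 • p.2) '' (G₀ ×ˢ (C ∪ Y.nbhd C)) with hF'def
  have hF'fin : F'.Finite := (hG₀fin.prod (hC.union hN)).image _
  refine ⟨hF'fin.toFinset, ?_⟩
  rw [Set.Finite.coe_toFinset]
  -- helper: from h in the index set, get k ∈ K and g ∈ G₀ with h = k * g
  have key : ∀ h : H, (((fun c => h • c) '' C) ∩ K.satSet C).Nonempty →
      ∃ k ∈ K, ∃ g ∈ G₀, h = k * g := by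
    rintro h ⟨x, ⟨c₁, hc₁, rfl⟩, k, hk, c₂, hc₂, hkc₂⟩
    refine ⟨k, hk, k⁻¹ * h, ?_, by group⟩
    have hg : (k⁻¹ * h) • c₁ = c₂ := by
      rw [mul_smul, show h • c₁ = k • c₂ from hkc₂.symm, inv_smul_smul]
    exact Set.mem_biUnion hc₁ (Set.mem_biUnion hc₂ hg)
  rintro v (hv | ⟨w, hw, hadj⟩)
  · rw [hB] at hv
    simp only [Set.mem_iUnion, Set.mem_setOf_eq] at hv
    obtain ⟨h, hh, c, hc, rfl⟩ := hv
    obtain ⟨k, hk, g, hg, rfl⟩ := key h hh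
    exact ⟨k, hk, g • c, ⟨(g, c), ⟨hg, Or.inl hc⟩, rfl⟩, (mul_smul k g c).symm⟩
  · rw [hB] at hw
    simp only [Set.mem_iUnion, Set.mem_setOf_eq] at hw
    obtain ⟨h, hh, c, hc, rfl⟩ := hw
    obtain ⟨k, hk, g, hg, hkg⟩ := key h hh
    have hu : h⁻¹ • v ∈ Y.nbhd C := by
      refine ⟨c, hc, ?_⟩
      rw [← haut h, smul_inv_smul]
      exact hadj
    refine ⟨k, hk, g • (h⁻¹ • v), ⟨(g, h⁻¹ • v), ⟨hg, Or.inr hu⟩, rfl⟩, ?_⟩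
    rw [← mul_smul, ← hkg, smul_inv_smul]
end

section
/- Let Y be a connected, locally finite simple graph with vertex set V, let H be a group acting freely on V by automorphisms of Y, and let S ⊆ V be finite. Then there exists a finite subset T ⊆ V such that every H-bounded connected component of the subgraph of Y induced on V ∖ H•S is contained in H•T; that is, the union of all H-bounded components of V ∖ H•S is itself H-bounded. -/
open SimpleGraph

section Aux
variable {V H : Type} [Group H] [MulAction H V]

variable {V H : Type} [Group H] [MulAction H V]

lemma satSet_smul_mem {W : Set V} (g : H) {x : V} (hx : x ∈ (⊤ : Subgroup H).satSet W) :
    g • x ∈ (⊤ : Subgroup H).satSet W := by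
  obtain ⟨h, -, s, hs, rfl⟩ := hx
  exact ⟨g * h, Subgroup.mem_top _, s, hs, mul_smul g h s⟩

def autIso (Y : SimpleGraph V) (haut : ∀ (g : H) (u v : V), Y.Adj (g • u) (g • v) ↔ Y.Adj u v)
    {W : Set V} (hW : ∀ (g : H) (v : V), v ∈ W → g • v ∈ W) (g : H) :
    Y.induce W ≃g Y.induce W where
  toFun x := ⟨g • x.1, hW g x.1 x.2⟩
  invFun x := ⟨g⁻¹ • x.1, hW g⁻¹ x.1 x.2⟩
  left_inv x := by ext; simp
  right_inv x := by ext; simp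
  map_rel_iff' := by
    rintro ⟨a, ha⟩ ⟨b, hb⟩
    simpa using haut g a b

lemma exists_boundary {Y : SimpleGraph V} {A : Set V} {v a : V} (hv : v ∈ Aᶜ) (ha : a ∈ A)
    (p : Y.Walk v a) : ∃ u, ∃ hu : u ∈ Aᶜ,
      (Y.induce Aᶜ).Reachable ⟨v, hv⟩ ⟨u, hu⟩ ∧ ∃ w ∈ A, Y.Adj u w := by
  revert ha hv
  induction p with
  | nil => intro hv ha; exact absurd ha hv
  | @cons v b a h q ih =>
    intro hv ha
    by_cases hb : b ∈ A
    · exact ⟨v, hv, Reachable.refl _, b, hb, h⟩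
    · have hb' : b ∈ Aᶜ := hb
      obtain ⟨u, hu, hr, hw⟩ := ih hb' ha
      have hadj : (Y.induce Aᶜ).Adj ⟨v, hv⟩ ⟨b, hb'⟩ := h
      exact ⟨u, hu, hadj.reachable.trans hr, hw⟩

end Aux

/-- The union of all `H`-bounded components of the complement of `H•S` is `H`-bounded. -/
theorem stmt10 {V H : Type} [Group H] [MulAction H V] (Y : SimpleGraph V)
    (hconn : Y.Connected)
    (hlf : ∀ v : V, (Y.neighborSet v).Finite)
    (hfree : ∀ (g : H) (v : V), g • v = v → g = 1)
    (haut : ∀ (g : H) (u v : V), Y.Adj (g • u) (g • v) ↔ Y.Adj u v)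
    (S : Finset V) :
    ∃ T : Finset V,
      ∀ c : (Y.induce (((⊤ : Subgroup H).satSet (S : Set V))ᶜ)).ConnectedComponent,
        (⊤ : Subgroup H).bddSet (Subtype.val '' c.supp) →
          Subtype.val '' c.supp ⊆ (⊤ : Subgroup H).satSet (T : Set V) := by
  classical
  set A := (⊤ : Subgroup H).satSet (S : Set V) with hA
  have hinv : ∀ (g : H) (v : V), v ∈ Aᶜ → g • v ∈ Aᶜ := by
    intro g v hv hmem
    have := satSet_smul_mem g⁻¹ hmem
    rw [inv_smul_smul] at this
    exact hv this
  have hN₀fin : {y : V | y ∈ Aᶜ ∧ ∃ s ∈ S, Y.Adj y s}.Finite := by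
    apply Set.Finite.subset (Set.Finite.biUnion S.finite_toSet fun s _ => hlf s)
    rintro y ⟨-, s, hs, hadj⟩
    exact Set.mem_biUnion hs hadj.symm
  let N : Finset V := hN₀fin.toFinset
  let comp : ∀ n : V, n ∈ Aᶜ → (Y.induce Aᶜ).ConnectedComponent := fun n hn =>
    SimpleGraph.connectedComponentMk _ ⟨n, hn⟩
  let P : V → Prop := fun n => ∃ (hn : n ∈ Aᶜ) (T : Finset V),
      Subtype.val '' (comp n hn).supp ⊆ (⊤ : Subgroup H).satSet (T : Set V)
  let Tn : V → Finset V := fun n => if h : P n then h.choose_spec.choose else ∅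
  have hTn : ∀ (n : V) (h : P n),
      Subtype.val '' (comp n h.choose).supp ⊆ (⊤ : Subgroup H).satSet (Tn n : Set V) := by
    intro n h
    simp only [Tn, dif_pos h]
    exact h.choose_spec.choose_spec
  let Q : Prop := ∃ (c : (Y.induce Aᶜ).ConnectedComponent) (T : Finset V),
      Subtype.val '' c.supp ⊆ (⊤ : Subgroup H).satSet (T : Set V)
  let Tu : Finset V := if h : Q then h.choose_spec.choose else ∅
  have hTu : ∀ h : Q, Subtype.val '' (h.choose).supp ⊆ (⊤ : Subgroup H).satSet (Tu : Set V) := by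
    intro h
    simp only [Tu, dif_pos h]
    exact h.choose_spec.choose_spec
  refine ⟨N.biUnion Tn ∪ Tu, ?_⟩
  intro c hbd
  obtain ⟨T₀, hT₀⟩ := hbd
  obtain ⟨⟨v, hv⟩, hvc⟩ := c.exists_rep
  rcases Set.eq_empty_or_nonempty A with hAe | ⟨a, ha⟩
  · -- A empty : the graph is connected, unique component
    have hQ : Q := ⟨c, T₀, hT₀⟩
    have hmemall : ∀ x : V, x ∈ Aᶜ := by intro x; rw [hAe]; exact Set.notMem_empty x
    have huniq : ∀ c' c'' : (Y.induce Aᶜ).ConnectedComponent, c' = c'' := by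
      intro c' c''
      obtain ⟨⟨x, hx⟩, hxc⟩ := c'.exists_rep
      obtain ⟨⟨y, hy⟩, hyc⟩ := c''.exists_rep
      rw [← hxc, ← hyc]
      apply SimpleGraph.ConnectedComponent.sound
      obtain ⟨p⟩ := hconn x y
      let f : Y →g Y.induce Aᶜ := ⟨fun z => ⟨z, hmemall z⟩, fun h => h⟩
      exact (Reachable.map f ⟨p⟩ : (Y.induce Aᶜ).Reachable ⟨x, _⟩ ⟨y, _⟩)
    have hsub := hTu hQ
    rw [huniq hQ.choose c] at hsub
    refine hsub.trans (Subgroup.satSet_mono _ ?_)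
    exact_mod_cast Finset.subset_union_right
  · -- A nonempty : boundary argument
    obtain ⟨p⟩ := hconn v a
    obtain ⟨u, hu, hr, w, hw, huw⟩ := exists_boundary hv ha p
    obtain ⟨g, -, s, hs, rfl⟩ := hw
    have hnc : g⁻¹ • u ∈ Aᶜ := hinv g⁻¹ u hu
    have hadjns : Y.Adj (g⁻¹ • u) s := by
      have := (haut g⁻¹ u (g • s)).mpr huw
      rwa [inv_smul_smul] at this
    have hnN : g⁻¹ • u ∈ N := by
      rw [Set.Finite.mem_toFinset]
      exact ⟨hnc, s, hs, hadjns⟩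
    have huc : SimpleGraph.connectedComponentMk _ (⟨u, hu⟩ : ↥(Aᶜ)) = c := by
      rw [← hvc]
      exact SimpleGraph.ConnectedComponent.sound hr.symm
    let e : ∀ g : H, Y.induce Aᶜ ≃g Y.induce Aᶜ := fun g => autIso Y haut hinv g
    -- key transfer
    have key : ∀ x : V, x ∈ Subtype.val '' (comp (g⁻¹ • u) hnc).supp ↔
        g • x ∈ Subtype.val '' c.supp := by
      intro x
      constructor
      · rintro ⟨y, hy, rfl⟩
        refine ⟨(e g) y, ?_, rfl⟩
        rw [SimpleGraph.ConnectedComponent.mem_supp_iff] at hy ⊢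
        rw [← huc]
        apply SimpleGraph.ConnectedComponent.sound
        have hreach : (Y.induce Aᶜ).Reachable y ⟨g⁻¹ • u, hnc⟩ :=
          (SimpleGraph.ConnectedComponent.exact hy)
        have := hreach.map (e g).toHom
        have heq : (e g).toHom (⟨g⁻¹ • u, hnc⟩ : ↥(Aᶜ)) = ⟨u, hu⟩ := by
          apply Subtype.ext
          simp [e, autIso, smul_inv_smul]
        rw [heq] at this
        exact this
      · rintro ⟨z, hz, hzx⟩
        refine ⟨(e g⁻¹) z, ?_, by simp [e, autIso, hzx, inv_smul_smul]⟩
        rw [SimpleGraph.ConnectedComponent.mem_supp_iff] at hz ⊢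
        apply SimpleGraph.ConnectedComponent.sound
        have hreach : (Y.induce Aᶜ).Reachable z ⟨u, hu⟩ := by
          apply SimpleGraph.ConnectedComponent.exact
          rw [hz, ← huc]
        have := hreach.map (e g⁻¹).toHom
        have heq : (e g⁻¹).toHom (⟨u, hu⟩ : ↥(Aᶜ)) = ⟨g⁻¹ • u, hnc⟩ := rfl
        rw [heq] at this
        exact this
    have hP : P (g⁻¹ • u) := by
      refine ⟨hnc, T₀, ?_⟩
      intro x hx
      have hmem := hT₀ ((key x).mp hx)
      have := satSet_smul_mem g⁻¹ hmem
      rwa [inv_smul_smul] at this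
    have hsub := hTn _ hP
    intro x hx
    have hx' : g⁻¹ • x ∈ Subtype.val '' (comp (g⁻¹ • u) hnc).supp := by
      rw [key (g⁻¹ • x), smul_inv_smul]
      exact hx
    have hmem : g⁻¹ • x ∈ (⊤ : Subgroup H).satSet (Tn (g⁻¹ • u) : Set V) := hsub hx'
    have hmem2 := satSet_smul_mem g hmem
    rw [smul_inv_smul] at hmem2
    refine Subgroup.satSet_mono _ ?_ hmem2
    intro t ht
    simp only [Finset.coe_union, Set.mem_union]
    left
    exact_mod_cast Finset.mem_biUnion.mpr ⟨g⁻¹ • u, hnN, by exact_mod_cast ht⟩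
end
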